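/- arXiv:2309.16607 — 3 statements merged into one kernel-verified Lean document; each statement's English description precedes it below -/
import Mathlib

section
/- Let q be a prime power, n a positive integer, μ and ν partitions of n, and let Δ ∈ M_n(𝔽_q) be a diagonalizable matrix of type ν. Then σ(μ,Δ) > 0 if and only if μ dominates ν, i.e. μ1 + ⋯ + μ_j ≥ ν1 + ⋯ + ν_j for every j ≥ 1. -/
open Matrix Module Polynomial

attribute [local instance] Classical.propDecidable

/-- `μ` is a partition: its parts are weakly decreasing. -/
def IsPtn (μ : ℕ →₀ ℕ) : Prop := ∀ i, μ (i + 1) ≤ μ i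

/-- The size `|μ|` of a partition. -/
def ptnSize (μ : ℕ →₀ ℕ) : ℕ := μ.sum fun _ v => v

/-- `W + ΔW + ⋯ + Δ^{j-1}W`. -/
noncomputable def iterSpan {F : Type} [Field F] {n : ℕ} (Δ : Matrix (Fin n) (Fin n) F)
    (W : Submodule F (Fin n → F)) (j : ℕ) : Submodule F (Fin n → F) :=
  ⨆ i ∈ Finset.range j, W.map (Δ ^ i).mulVecLin

/-- `W` has `Δ`-profile `μ`. -/
def HasProfile {F : Type} [Field F] {n : ℕ} (Δ : Matrix (Fin n) (Fin n) F)
    (μ : ℕ →₀ ℕ) (W : Submodule F (Fin n → F)) : Prop :=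
  ∀ j : ℕ, Module.finrank F (iterSpan Δ W (j + 1)) = ∑ i ∈ Finset.range (j + 1), μ i

/-- `σ(μ, Δ)`: the number of subspaces with `Δ`-profile `μ`. -/
noncomputable def sigmaProf {F : Type} [Field F] {n : ℕ} (μ : ℕ →₀ ℕ)
    (Δ : Matrix (Fin n) (Fin n) F) : ℕ :=
  Nat.card {W : Submodule F (Fin n → F) // HasProfile Δ μ W}

/-- `X_α(Δ)`: the number of flags of `Δ`-invariant subspaces with successive
quotient dimensions given by `α`. -/
noncomputable def Xflag {F : Type} [Field F] {n ℓ : ℕ} (Δ : Matrix (Fin n) (Fin n) F)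
    (α : Fin ℓ → ℕ) : ℕ :=
  Nat.card {W : Fin (ℓ + 1) → Submodule F (Fin n → F) //
    Monotone W ∧ W 0 = ⊥ ∧ W (Fin.last ℓ) = ⊤ ∧
    (∀ i, (W i).map Δ.mulVecLin ≤ W i) ∧
    ∀ i : Fin ℓ, Module.finrank F (W i.succ) = Module.finrank F (W i.castSucc) + α i}

/-- The Gaussian binomial coefficient as a polynomial in `t`. -/
noncomputable def qbp : ℕ → ℕ → Polynomial ℤ
  | _, 0 => 1
  | 0, _ + 1 => 0
  | a + 1, b + 1 => qbp a b + Polynomial.X ^ (b + 1) * qbp a (b + 1)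

/-- The `q`-integer `[m]_t`. -/
def qNat (t : ℚ) (m : ℕ) : ℚ := ∑ i ∈ Finset.range m, t ^ i

/-- The `q`-factorial `[m]_t!`. -/
def qFact (t : ℚ) (m : ℕ) : ℚ := ∏ i ∈ Finset.range m, qNat t (i + 1)


/-- `Δ` is diagonalizable of type `ν`: there are distinct eigenvalues, indexed by the
support of `ν`, whose eigenspaces have dimension given by the parts of `ν` and whose sum
is the whole space. -/
def DiagOfType {F : Type} [Field F] {n : ℕ} (Δ : Matrix (Fin n) (Fin n) F)
    (ν : ℕ →₀ ℕ) : Prop :=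
  ∃ a : ℕ → F, Set.InjOn a ν.support ∧
    (⨆ i ∈ ν.support, Module.End.eigenspace Δ.mulVecLin (a i)) = ⊤ ∧
    ∀ i ∈ ν.support,
      Module.finrank F (Module.End.eigenspace Δ.mulVecLin (a i)) = ν i


section AuxBasic

variable {F : Type} [Field F] {n : ℕ}

lemma mulVecLin_pow' (Δ : Matrix (Fin n) (Fin n) F) (i : ℕ) :
    (Δ ^ i).mulVecLin = (Δ.mulVecLin) ^ i := by
  induction i with
  | zero => simp [Matrix.mulVecLin_one]; rfl
  | succ k ih =>
      rw [pow_succ, pow_succ, Matrix.mulVecLin_mul, ih]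
      rfl

lemma isPtn_antitone {μ : ℕ →₀ ℕ} (hμ : IsPtn μ) {i j : ℕ} (h : i ≤ j) : μ j ≤ μ i := by
  induction j with
  | zero => simp_all
  | succ k ih =>
      rcases Nat.lt_or_ge i (k+1) with hl | hg
      · exact le_trans (hμ k) (ih (Nat.lt_succ_iff.mp hl))
      · have : i = k + 1 := le_antisymm h hg
        simp [this]

lemma ptnSize_eq_sum_range (μ : ℕ →₀ ℕ) {M : ℕ} (h : μ.support ⊆ Finset.range M) :
    ∑ i ∈ Finset.range M, μ i = ptnSize μ := by
  rw [ptnSize, Finsupp.sum]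
  exact (Finset.sum_subset h (fun x _ hx => Finsupp.notMem_support_iff.mp hx)).symm

lemma exists_supp_range (μ : ℕ →₀ ℕ) : ∃ M, 0 < M ∧ μ.support ⊆ Finset.range M := by
  refine ⟨μ.support.sup id + 1, Nat.succ_pos _, fun i hi => ?_⟩
  simp only [Finset.mem_range]
  exact Nat.lt_succ_of_le (Finset.le_sup (f := id) hi)

lemma part_le_ptnSize (μ : ℕ →₀ ℕ) (m : ℕ) : μ m ≤ ptnSize μ := by
  by_cases h : μ m = 0
  · simp [h]
  · exact Finset.single_le_sum (f := fun i => μ i) (fun _ _ => Nat.zero_le _)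
      (Finsupp.mem_support_iff.mpr h)

lemma aeval_eigen {V : Type} [AddCommGroup V] [Module F V] {f : Module.End F V} {c : F} {x : V}
    (h : x ∈ f.eigenspace c) (p : F[X]) : (Polynomial.aeval f) p x = p.eval c • x := by
  rcases eq_or_ne x 0 with rfl | hx
  · simp
  · exact Module.End.aeval_apply_of_hasEigenvector ⟨h, hx⟩

lemma pow_eigen {V : Type} [AddCommGroup V] [Module F V] {f : Module.End F V} {c : F} {x : V}
    (h : x ∈ f.eigenspace c) (m : ℕ) : (f ^ m) x = c ^ m • x := by
  have := aeval_eigen h (Polynomial.X ^ m)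
  simpa using this

lemma finite_submodule [Fintype F] : Finite (Submodule F (Fin n → F)) :=
  Finite.of_injective (fun W => (W : Set (Fin n → F))) (SetLike.coe_injective)

lemma sigmaProf_pos_iff [Fintype F] (μ : ℕ →₀ ℕ) (Δ : Matrix (Fin n) (Fin n) F) :
    0 < sigmaProf μ Δ ↔ ∃ W, HasProfile Δ μ W := by
  haveI : Finite (Submodule F (Fin n → F)) := finite_submodule
  rw [sigmaProf, Nat.card_pos_iff]
  constructor
  · rintro ⟨⟨W, hW⟩, -⟩; exact ⟨W, hW⟩
  · rintro ⟨W, hW⟩; exact ⟨⟨⟨W, hW⟩⟩, inferInstance⟩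

lemma iterSpan_eq_end (Δ : Matrix (Fin n) (Fin n) F) (W : Submodule F (Fin n → F)) (j : ℕ) :
    iterSpan Δ W j = ⨆ i ∈ Finset.range j, W.map ((Δ.mulVecLin) ^ i) := by
  simp only [iterSpan, mulVecLin_pow']

lemma mem_iterSpan_of (Δ : Matrix (Fin n) (Fin n) F) (W : Submodule F (Fin n → F)) {j m : ℕ}
    (hm : m < j) {w : Fin n → F} (hw : w ∈ W) : ((Δ.mulVecLin) ^ m) w ∈ iterSpan Δ W j := by
  rw [iterSpan_eq_end]
  exact Submodule.mem_iSup_of_mem m (Submodule.mem_iSup_of_mem (Finset.mem_range.mpr hm)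
    (Submodule.mem_map_of_mem hw))

end AuxBasic
section Forward

variable {F : Type} [Field F] {n : ℕ}

lemma forward_dominance (Δ : Matrix (Fin n) (Fin n) F) {ν : ℕ →₀ ℕ} (hΔ : DiagOfType Δ ν)
    {μ : ℕ →₀ ℕ} (hμn : ptnSize μ = n) {W : Submodule F (Fin n → F)} (hW : HasProfile Δ μ W) :
    ∀ j : ℕ, ∑ i ∈ Finset.range j, ν i ≤ ∑ i ∈ Finset.range j, μ i := by
  classical
  obtain ⟨a, hinj, htop, hdim⟩ := hΔ
  set L := Δ.mulVecLin with hL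
  set E : ℕ → Submodule F (Fin n → F) := fun i => Module.End.eigenspace L (a i) with hE
  -- the spectral projections
  set π : ℕ → Module.End F (Fin n → F) := fun i =>
    Polynomial.aeval L (Lagrange.interpolate ν.support a (fun s => if s = i then (1:F) else 0))
    with hπ
  have hπ_on_E : ∀ s ∈ ν.support, ∀ i, ∀ x ∈ E s, π i x = if s = i then x else 0 := by
    intro s hs i x hx
    have h1 : π i x = Polynomial.eval (a s)
        (Lagrange.interpolate ν.support a fun t => if t = i then (1:F) else 0) • x :=
      aeval_eigen hx _
    rw [h1, Lagrange.eval_interpolate_at_node _ hinj hs]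
    split <;> simp
  have hπ_mem : ∀ i, ∀ x, π i x ∈ E i := by
    intro i x
    have h : (⨆ s ∈ ν.support, E s) ≤ Submodule.comap (π i) (E i) := by
      refine iSup_le fun s => iSup_le fun hs y hy => ?_
      simp only [Submodule.mem_comap]
      rw [hπ_on_E s hs i y hy]
      split
      · next h => exact h ▸ hy
      · exact Submodule.zero_mem _
    exact h (htop ▸ Submodule.mem_top : x ∈ ⨆ s ∈ ν.support, E s)
  have hπ_comm : ∀ i (p : F[X]) (x : Fin n → F),
      π i (Polynomial.aeval L p x) = Polynomial.aeval L p (π i x) := by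
    intro i p x
    have hc : π i * Polynomial.aeval L p = Polynomial.aeval L p * π i := by
      show Polynomial.aeval L _ * Polynomial.aeval L p
        = Polynomial.aeval L p * Polynomial.aeval L _
      rw [← _root_.map_mul, ← _root_.map_mul, mul_comm]
    calc π i (Polynomial.aeval L p x) = (π i * Polynomial.aeval L p) x := rfl
      _ = (Polynomial.aeval L p * π i) x := by rw [hc]
      _ = Polynomial.aeval L p (π i x) := rfl
  -- iterSpan becomes everything
  obtain ⟨M, hM0, hMsupp⟩ := exists_supp_range μ
  have hTop : iterSpan Δ W M = ⊤ := by
    apply Submodule.eq_top_of_finrank_eq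
    have h := hW (M - 1)
    rw [Nat.sub_add_cancel hM0] at h
    rw [h, ptnSize_eq_sum_range μ hMsupp, hμn]
    simp [Module.finrank_pi]
  have hmapW : ∀ i ∈ ν.support, E i ≤ W.map (π i) := by
    intro i hi x hx
    have hx' : x ∈ Submodule.map (π i) (iterSpan Δ W M) := by
      rw [hTop]
      refine ⟨x, Submodule.mem_top, ?_⟩
      simpa using hπ_on_E i hi i x hx
    -- now push into W
    suffices h : Submodule.map (π i) (iterSpan Δ W M) ≤ W.map (π i) from h hx'
    rw [iterSpan_eq_end, Submodule.map_iSup]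
    refine iSup_le fun m => ?_
    rw [Submodule.map_iSup]
    refine iSup_le fun _ => ?_
    rintro y ⟨z, ⟨w, hw, rfl⟩, rfl⟩
    have h1 : π i ((L ^ m) w) = (a i) ^ m • π i w := by
      have h2 : π i ((L ^ m) w) = (L ^ m) (π i w) := by
        have := hπ_comm i (Polynomial.X ^ m) w
        simpa using this
      rw [h2, pow_eigen (hπ_mem i w) m]
    refine ⟨(a i) ^ m • w, Submodule.smul_mem _ _ hw, ?_⟩
    show π i ((a i) ^ m • w) = π i ((L ^ m) w)
    rw [_root_.map_smul, h1]
  -- main inequality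
  intro j
  rcases Nat.eq_zero_or_pos j with rfl | hj
  · simp
  set S : Finset ℕ := ν.support ∩ Finset.range j with hS
  have hScard : S.card ≤ j := by
    calc S.card ≤ (Finset.range j).card := Finset.card_le_card Finset.inter_subset_right
      _ = j := Finset.card_range j
  have hsum_eq : ∑ i ∈ Finset.range j, ν i = ∑ i ∈ S, ν i := by
    refine (Finset.sum_subset Finset.inter_subset_right fun x hx hx' => ?_).symm
    by_contra h
    exact hx' (Finset.mem_inter.mpr ⟨Finsupp.mem_support_iff.mpr h, hx⟩)
  have hSsupp : (S : Set ℕ) ⊆ ν.support := by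
    intro x hx; exact Finset.mem_inter.mp hx |>.1
  have hinjS : Set.InjOn a (S : Set ℕ) := hinj.mono hSsupp
  -- the linear map g
  set g : (Fin n → F) →ₗ[F] (∀ i : ↥S, ↥(E i.val)) :=
    LinearMap.pi (fun i => LinearMap.codRestrict (E i.val) (π i.val) (hπ_mem i.val)) with hg
  have hmap_top : Submodule.map g (iterSpan Δ W j) = ⊤ := by
    rw [eq_top_iff]
    intro y _
    rw [← Finset.univ_sum_single y]
    refine Submodule.sum_mem _ fun i0 _ => ?_
    -- find w with π i0 w = y i0
    have hi0supp : (i0 : ℕ) ∈ ν.support := hSsupp i0.2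
    obtain ⟨w, hw, hww⟩ := hmapW i0.val hi0supp (y i0).2
    set P : F[X] := Lagrange.interpolate S a (fun s => if s = i0.val then (1:F) else 0) with hP
    have hPdeg : P.natDegree < j := by
      rcases eq_or_ne P 0 with h0 | h0
      · rw [h0]; simpa using hj
      · rw [Polynomial.natDegree_lt_iff_degree_lt h0]
        calc P.degree < (S.card : WithBot ℕ) := Lagrange.degree_interpolate_lt _ hinjS
          _ ≤ (j : WithBot ℕ) := by exact_mod_cast hScard
    set u := Polynomial.aeval L P w with hu
    have hu_mem : u ∈ iterSpan Δ W j := by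
      rw [hu, Polynomial.aeval_eq_sum_range' hPdeg]
      simp only [LinearMap.coe_sum, Finset.sum_apply, LinearMap.smul_apply]
      refine Submodule.sum_mem _ fun m hm => ?_
      exact Submodule.smul_mem _ _ (mem_iterSpan_of Δ W (Finset.mem_range.mp hm) hw)
    refine ⟨u, hu_mem, ?_⟩
    funext i
    apply Subtype.ext
    have hgu : ((g u i : Fin n → F)) = (π i.val) u := rfl
    rw [hgu, hu, hπ_comm i.val P w]
    have hπw : π i.val w ∈ E i.val := hπ_mem i.val w
    rw [aeval_eigen hπw P, hP, Lagrange.eval_interpolate_at_node _ hinjS i.2]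
    rcases eq_or_ne i i0 with rfl | hne
    · simp only [if_pos rfl, one_smul]
      rw [hww]
      simp [Pi.single_apply]
    · have hne' : (i : ℕ) ≠ (i0 : ℕ) := fun h => hne (Subtype.ext h)
      rw [if_neg hne', zero_smul]
      simp [Pi.single_apply, hne]
  -- conclude via dimensions
  have hfr : Module.finrank F (∀ i : ↥S, ↥(E i.val)) = ∑ i ∈ S, ν i := by
    rw [Module.finrank_pi_fintype]
    rw [← Finset.sum_attach S (fun i => ν i)]
    exact Finset.sum_congr rfl fun i _ => hdim i.val (hSsupp i.2)
  calc ∑ i ∈ Finset.range j, ν i = ∑ i ∈ S, ν i := hsum_eq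
    _ = Module.finrank F (∀ i : ↥S, ↥(E i.val)) := hfr.symm
    _ = Module.finrank F ↥(Submodule.map g (iterSpan Δ W j)) := by rw [hmap_top, finrank_top]
    _ ≤ Module.finrank F ↥(iterSpan Δ W j) := Submodule.finrank_map_le g _
    _ = ∑ i ∈ Finset.range j, μ i := by
        have h := hW (j - 1)
        rwa [Nat.sub_add_cancel hj] at h

end Forward
/-- Partial sums of a partition. -/
def psum (μ : ℕ →₀ ℕ) (j : ℕ) : ℕ := ∑ i ∈ Finset.range j, μ i

/-- Column heights (conjugate partition), computed inside `range N`. -/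
def colHtN (N : ℕ) (μ : ℕ →₀ ℕ) (t : ℕ) : ℕ :=
  ((Finset.range N).filter (fun r => t < μ r)).card

section PtnAux

lemma psum_mono (μ : ℕ →₀ ℕ) {j k : ℕ} (h : j ≤ k) : psum μ j ≤ psum μ k :=
  Finset.sum_le_sum_of_subset (Finset.range_subset_range.mpr h)

lemma psum_le_ptnSize (μ : ℕ →₀ ℕ) (j : ℕ) : psum μ j ≤ ptnSize μ := by
  obtain ⟨M, _, hM⟩ := exists_supp_range μ
  calc psum μ j ≤ psum μ (max j M) := psum_mono μ (le_max_left _ _)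
    _ = ptnSize μ := ptnSize_eq_sum_range μ (hM.trans (Finset.range_subset_range.mpr (le_max_right _ _)))

lemma isPtn_supp_lt {μ : ℕ →₀ ℕ} (hμ : IsPtn μ) {i : ℕ} (hi : i ∈ μ.support) :
    i < ptnSize μ := by
  have h1 : ∀ r < i + 1, 1 ≤ μ r := by
    intro r hr
    have h2 : μ i ≤ μ r := isPtn_antitone hμ (by omega)
    have h3 := Finsupp.mem_support_iff.mp hi
    omega
  have h4 : i + 1 ≤ psum μ (i + 1) := by
    calc i + 1 = ∑ _r ∈ Finset.range (i+1), 1 := by simp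
      _ ≤ psum μ (i + 1) := Finset.sum_le_sum fun r hr => h1 r (Finset.mem_range.mp hr)
  have := psum_le_ptnSize μ (i + 1)
  omega

lemma isPtn_supp_subset {μ : ℕ →₀ ℕ} (hμ : IsPtn μ) {N : ℕ} (hN : ptnSize μ ≤ N) :
    μ.support ⊆ Finset.range N := fun i hi =>
  Finset.mem_range.mpr (lt_of_lt_of_le (isPtn_supp_lt hμ hi) hN)

lemma lt_colHtN_iff {μ : ℕ →₀ ℕ} (hμ : IsPtn μ) {N : ℕ} (hN : ptnSize μ ≤ N) {t m : ℕ} :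
    m < colHtN N μ t ↔ t < μ m := by
  constructor
  · intro h
    have h2 : ∃ r ∈ (Finset.range N).filter (fun r => t < μ r), m ≤ r := by
      by_contra hc
      push_neg at hc
      have hsub : (Finset.range N).filter (fun r => t < μ r) ⊆ Finset.range m := by
        intro r hr; exact Finset.mem_range.mpr (hc r hr)
      have := Finset.card_le_card hsub
      rw [Finset.card_range] at this
      rw [colHtN] at h
      omega
    obtain ⟨r, hr, hmr⟩ := h2
    have := (Finset.mem_filter.mp hr).2
    calc t < μ r := this
      _ ≤ μ m := isPtn_antitone hμ hmr
  · intro h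
    have hm_supp : m ∈ μ.support := Finsupp.mem_support_iff.mpr (by omega)
    have hmN : m < N := lt_of_lt_of_le (isPtn_supp_lt hμ hm_supp) hN
    have hsub : Finset.range (m + 1) ⊆ (Finset.range N).filter (fun r => t < μ r) := by
      intro r hr
      have hrm : r ≤ m := by have := Finset.mem_range.mp hr; omega
      refine Finset.mem_filter.mpr ⟨Finset.mem_range.mpr (by omega), ?_⟩
      calc t < μ m := h
        _ ≤ μ r := isPtn_antitone hμ hrm
    have := Finset.card_le_card hsub
    rw [Finset.card_range] at this
    rw [colHtN]
    omega

lemma sum_ite_lt (j h : ℕ) : (∑ m ∈ Finset.range j, if m < h then 1 else 0) = min j h := by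
  induction j with
  | zero => simp
  | succ k ih =>
      rw [Finset.sum_range_succ, ih]
      by_cases hk : k < h
      · rw [if_pos hk]; omega
      · rw [if_neg hk]; omega

lemma colHt_sum {μ : ℕ →₀ ℕ} (hμ : IsPtn μ) {N : ℕ} (hN : ptnSize μ ≤ N) (j : ℕ) :
    ∑ t ∈ Finset.range N, min j (colHtN N μ t) = psum μ j := by
  classical
  have h1 : ∀ t, min j (colHtN N μ t) = ∑ m ∈ Finset.range j,
      if m < colHtN N μ t then 1 else 0 := fun t => (sum_ite_lt j _).symm
  rw [Finset.sum_congr rfl (fun t _ => h1 t), Finset.sum_comm]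
  refine Finset.sum_congr rfl fun m _ => ?_
  have h2 : ∀ t, (if m < colHtN N μ t then (1:ℕ) else 0) = if t < μ m then 1 else 0 :=
    fun t => if_congr (lt_colHtN_iff hμ hN) rfl rfl
  rw [Finset.sum_congr rfl (fun t _ => h2 t)]
  have h3 : ∀ t ∈ Finset.range N, (if t < μ m then (1:ℕ) else 0) =
      if t ∈ Finset.range (μ m) then 1 else 0 := by
    intro t _; simp [Finset.mem_range]
  rw [Finset.sum_congr rfl h3, Finset.sum_ite_mem]
  have h4 : Finset.range N ∩ Finset.range (μ m) = Finset.range (μ m) := by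
    have h5 : μ m ≤ ptnSize μ := part_le_ptnSize μ m
    ext x
    simp only [Finset.mem_inter, Finset.mem_range]
    omega
  rw [h4]
  simp

lemma colHtN_antitone (N : ℕ) (μ : ℕ →₀ ℕ) {t t' : ℕ} (h : t' ≤ t) :
    colHtN N μ t ≤ colHtN N μ t' := by
  apply Finset.card_le_card
  intro r hr
  rw [Finset.mem_filter] at hr ⊢
  exact ⟨hr.1, by omega⟩

end PtnAux
section Move

lemma exists_move {μ ν : ℕ →₀ ℕ} (hμ : IsPtn μ) (hν : IsPtn ν)
    (hsize : ptnSize μ = ptnSize ν) (hdom : ∀ j, psum ν j ≤ psum μ j) (hne : μ ≠ ν) :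
    ∃ (μ' : ℕ →₀ ℕ) (s' u : ℕ), IsPtn μ' ∧ ptnSize μ' = ptnSize ν ∧
      (∀ j, psum ν j ≤ psum μ' j) ∧
      s' < u ∧ u < ptnSize ν ∧ μ u + 2 ≤ μ s' ∧
      μ' s' = μ s' - 1 ∧ μ' u = μ u + 1 ∧ (∀ r, r ≠ s' → r ≠ u → μ' r = μ r) ∧
      (∀ j, psum μ' j + (if s' < j ∧ j ≤ u then 1 else 0) = psum μ j) := by
  classical
  have hex : ∃ j, μ j ≠ ν j := by
    by_contra h; push_neg at h; exact hne (Finsupp.ext h)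
  set s := Nat.find hex with hs
  have hsne : μ s ≠ ν s := Nat.find_spec hex
  have hsmin : ∀ r, r < s → μ r = ν r := fun r hr => by
    by_contra h; exact Nat.find_min hex hr h
  have hpsum_s : psum ν s = psum μ s :=
    Finset.sum_congr rfl fun r hr => (hsmin r (Finset.mem_range.mp hr)).symm
  have hlt : ν s < μ s := by
    have h1 := hdom (s + 1)
    rw [psum, psum, Finset.sum_range_succ, Finset.sum_range_succ] at h1
    have h2 : psum ν s = ∑ i ∈ Finset.range s, ν i := rfl
    have h3 : psum μ s = ∑ i ∈ Finset.range s, μ i := rfl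
    omega
  have hμs2 : 2 ≤ μ s := by
    by_contra h
    push_neg at h
    have hνs0 : ν s = 0 := by omega
    have hνsupp : ν.support ⊆ Finset.range s := by
      intro i hi
      rw [Finset.mem_range]
      by_contra hge
      push_neg at hge
      have h5 : ν i ≤ ν s := isPtn_antitone hν hge
      have h6 := Finsupp.mem_support_iff.mp hi
      omega
    have h1 : ptnSize ν = psum ν s := (ptnSize_eq_sum_range ν hνsupp).symm
    have h2 : psum μ (s + 1) ≤ ptnSize μ := psum_le_ptnSize μ _
    have h3 : psum μ (s + 1) = psum μ s + μ s := Finset.sum_range_succ _ _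
    omega
  -- s' : last index of the block of value μ s
  have hTne : s ∈ μ.support.filter (fun r => μ r = μ s) := by
    refine Finset.mem_filter.mpr ⟨Finsupp.mem_support_iff.mpr (by omega), rfl⟩
  set T := μ.support.filter (fun r => μ r = μ s) with hT
  set s' := T.max' ⟨s, hTne⟩ with hs'
  have hs'T : s' ∈ T := Finset.max'_mem _ _
  have hμs' : μ s' = μ s := (Finset.mem_filter.mp hs'T).2
  have hss' : s ≤ s' := Finset.le_max' T s hTne
  have hs'succ : μ (s' + 1) < μ s := by
    rcases lt_or_ge (μ (s' + 1)) (μ s) with h | h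
    · exact h
    · exfalso
      have h1 : μ (s' + 1) ≤ μ s' := hμ s'
      have h2 : μ (s' + 1) = μ s := by omega
      have h3 : s' + 1 ∈ T := by
        refine Finset.mem_filter.mpr ⟨Finsupp.mem_support_iff.mpr (by omega), h2⟩
      have := Finset.le_max' T _ h3
      omega
  -- u : least index > s' with μ u ≤ μ s - 2
  have hexu : ∃ r, s' < r ∧ μ r ≤ μ s - 2 := by
    refine ⟨ptnSize μ + s' + 1, by omega, ?_⟩
    have h0 : ptnSize μ + s' + 1 ∉ μ.support := fun h => by
      have := isPtn_supp_lt hμ h; omega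
    have h1 : μ (ptnSize μ + s' + 1) = 0 := Finsupp.notMem_support_iff.mp h0
    omega
  set u := Nat.find hexu with hu_def
  obtain ⟨hs'u, hμu⟩ : s' < u ∧ μ u ≤ μ s - 2 := Nat.find_spec hexu
  have hmid : ∀ r, s' < r → r < u → μ r = μ s - 1 := by
    intro r h1 h2
    have h3 := Nat.find_min hexu h2
    rw [not_and] at h3
    have h4 := h3 h1
    have h5 : μ r ≤ μ (s' + 1) := isPtn_antitone hμ (by omega)
    omega
  -- μ'
  set μ' := (μ.update s' (μ s' - 1)).update u (μ u + 1) with hμ'def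
  have happ : ∀ r, μ' r = if r = u then μ u + 1 else if r = s' then μ s - 1 else μ r := by
    intro r
    rw [hμ'def]
    rw [show ((μ.update s' (μ s' - 1)).update u (μ u + 1)) r
      = Function.update (⇑(μ.update s' (μ s' - 1))) u (μ u + 1) r from by
        rw [Finsupp.coe_update]]
    rw [Function.update_apply]
    rcases eq_or_ne r u with rfl | hru
    · simp
    · rw [if_neg hru]
      rw [show (μ.update s' (μ s' - 1)) r = Function.update (⇑μ) s' (μ s' - 1) r from by
        rw [Finsupp.coe_update]]
      rw [Function.update_apply, hμs', if_neg hru]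
  have hval_s' : μ' s' = μ s' - 1 := by rw [happ, if_neg (by omega), if_pos rfl, hμs']
  have hval_u : μ' u = μ u + 1 := by rw [happ, if_pos rfl]
  have hval_other : ∀ r, r ≠ s' → r ≠ u → μ' r = μ r := by
    intro r h1 h2
    rw [happ, if_neg h2, if_neg h1]
  -- partial sums
  have hpsum' : ∀ j, psum μ' j + (if s' < j ∧ j ≤ u then 1 else 0) = psum μ j := by
    intro j
    induction j with
    | zero => simp [psum]
    | succ k ih =>
        have h1 : psum μ' (k + 1) = psum μ' k + μ' k := Finset.sum_range_succ _ _
        have h2 : psum μ (k + 1) = psum μ k + μ k := Finset.sum_range_succ _ _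
        rcases eq_or_ne k u with rfl | hku
        · rw [if_pos ⟨hs'u, le_refl u⟩] at ih
          rw [if_neg (by omega), h1, h2, hval_u]
          omega
        · rcases eq_or_ne k s' with rfl | hks
          · rw [if_neg (by omega)] at ih
            rw [if_pos (by omega), h1, h2, hval_s', hμs']
            omega
          · have h3 : μ' k = μ k := hval_other k hks hku
            rw [h1, h2, h3]
            by_cases hc : s' < k ∧ k ≤ u
            · rw [if_pos hc] at ih
              rw [if_pos (by omega)]
              omega
            · rw [if_neg hc] at ih
              have hc' : ¬(s' < k + 1 ∧ k + 1 ≤ u) := by omega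
              rw [if_neg hc']
              omega
  -- IsPtn μ'
  have hptn' : IsPtn μ' := by
    intro r
    rw [happ (r + 1), happ r]
    rcases eq_or_ne (r + 1) u with h1 | h1
    · rw [if_pos h1]
      rcases eq_or_ne r u with rfl | h2
      · omega
      · rw [if_neg h2]
        rcases eq_or_ne r s' with rfl | h3
        · rw [if_pos rfl]; omega
        · rw [if_neg h3]
          have h4 : μ r = μ s - 1 := hmid r (by omega) (by omega)
          omega
    · rw [if_neg h1]
      rcases eq_or_ne (r + 1) s' with h5 | h5
      · rw [if_pos h5]
        have h6 : r ≠ u := by omega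
        have h7 : r ≠ s' := by omega
        rw [if_neg h6, if_neg h7]
        have h8 : μ s' ≤ μ r := isPtn_antitone hμ (by omega)
        omega
      · rw [if_neg h5]
        rcases eq_or_ne r u with rfl | h6
        · rw [if_pos rfl]
          have := hμ u
          omega
        · rw [if_neg h6]
          rcases eq_or_ne r s' with rfl | h7
          · rw [if_pos rfl]
            have := hs'succ
            omega
          · rw [if_neg h7]
            exact hμ r
  -- sizes
  have hsize' : ptnSize μ' = ptnSize ν := by
    obtain ⟨M0, hM0pos, hM0⟩ := exists_supp_range μ
    set M := M0 + u + 1 with hM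
    have hMμ : μ.support ⊆ Finset.range M := hM0.trans (Finset.range_subset_range.mpr (by omega))
    have hMμ' : μ'.support ⊆ Finset.range M := by
      intro r hr
      have hr' := Finsupp.mem_support_iff.mp hr
      rw [Finset.mem_range]
      rcases eq_or_ne r u with rfl | h1
      · omega
      · rcases eq_or_ne r s' with rfl | h2
        · omega
        · have := hval_other r h2 h1
          have h3 : r ∈ μ.support := Finsupp.mem_support_iff.mpr (by omega)
          have := Finset.mem_range.mp (hMμ h3)
          omega
    have e1 : psum μ' M = ptnSize μ' := ptnSize_eq_sum_range μ' hMμ'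
    have e2 : psum μ M = ptnSize μ := ptnSize_eq_sum_range μ hMμ
    have e3 := hpsum' M
    rw [if_neg (by omega)] at e3
    omega
  -- dominance for μ'
  have hdom' : ∀ j, psum ν j ≤ psum μ' j := by
    intro j
    have e3 := hpsum' j
    by_cases hc : s' < j ∧ j ≤ u
    · -- strict bound needed
      rw [if_pos hc] at e3
      obtain ⟨hc1, hc2⟩ := hc
      -- sums over Ico s j
      have hsplitν : psum ν j = psum ν s + ∑ i ∈ Finset.Ico s j, ν i := by
        simp only [psum, Finset.range_eq_Ico]
        exact (Finset.sum_Ico_consecutive _ (by omega) (by omega)).symm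
      have hsplitμ : psum μ j = psum μ s + ∑ i ∈ Finset.Ico s j, μ i := by
        simp only [psum, Finset.range_eq_Ico]
        exact (Finset.sum_Ico_consecutive _ (by omega) (by omega)).symm
      have hA : ∑ i ∈ Finset.Ico s j, ν i ≤ (j - s) * ν s := by
        calc ∑ i ∈ Finset.Ico s j, ν i ≤ ∑ _i ∈ Finset.Ico s j, ν s :=
              Finset.sum_le_sum fun i hi =>
                isPtn_antitone hν (Finset.mem_Ico.mp hi).1
          _ = (j - s) * ν s := by rw [Finset.sum_const, Nat.card_Ico, smul_eq_mul]
      have hB : ∑ i ∈ Finset.Ico s j, μ i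
          = (s' + 1 - s) * μ s + (j - (s' + 1)) * (μ s - 1) := by
        rw [← Finset.sum_Ico_consecutive (fun i => μ i) (show s ≤ s' + 1 by omega)
          (show s' + 1 ≤ j by omega)]
        congr 1
        · calc ∑ i ∈ Finset.Ico s (s' + 1), μ i = ∑ _i ∈ Finset.Ico s (s' + 1), μ s := by
                refine Finset.sum_congr rfl fun i hi => ?_
                have h1 := Finset.mem_Ico.mp hi
                have h2 : μ i ≤ μ s := isPtn_antitone hμ h1.1
                have h3 : μ s' ≤ μ i := isPtn_antitone hμ (by omega)
                omega
            _ = (s' + 1 - s) * μ s := by rw [Finset.sum_const, Nat.card_Ico, smul_eq_mul]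
        · calc ∑ i ∈ Finset.Ico (s' + 1) j, μ i
              = ∑ _i ∈ Finset.Ico (s' + 1) j, (μ s - 1) := by
                refine Finset.sum_congr rfl fun i hi => ?_
                have h1 := Finset.mem_Ico.mp hi
                exact hmid i (by omega) (by omega)
            _ = (j - (s' + 1)) * (μ s - 1) := by
                rw [Finset.sum_const, Nat.card_Ico, smul_eq_mul]
      -- reduce to linear arithmetic
      obtain ⟨K1, hK1⟩ : ∃ k, k = (j - s) * ν s := ⟨_, rfl⟩
      obtain ⟨K2, hK2⟩ : ∃ k, k = (j - s) * (μ s - 1) := ⟨_, rfl⟩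
      obtain ⟨K3, hK3⟩ : ∃ k, k = (s' + 1 - s) * μ s := ⟨_, rfl⟩
      obtain ⟨K4, hK4⟩ : ∃ k, k = (j - (s' + 1)) * (μ s - 1) := ⟨_, rfl⟩
      have hK12 : K1 ≤ K2 := by
        rw [hK1, hK2]; exact Nat.mul_le_mul_left _ (by omega)
      have hK34 : K3 + K4 = K2 + (s' + 1 - s) := by
        obtain ⟨m, hm⟩ : ∃ m, μ s = m + 1 := ⟨μ s - 1, by omega⟩
        obtain ⟨aa, haa⟩ : ∃ aa, s' + 1 - s = aa := ⟨_, rfl⟩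
        obtain ⟨bb, hbb⟩ : ∃ bb, j - (s' + 1) = bb := ⟨_, rfl⟩
        have hab : j - s = aa + bb := by omega
        rw [hK3, hK4, hK2, hm, hab, haa, hbb]
        have hmm : m + 1 - 1 = m := by omega
        rw [hmm]
        ring
      rw [← hK1] at hA
      rw [← hK3, ← hK4] at hB
      omega
    · rw [if_neg hc] at e3
      have := hdom j
      omega
  exact ⟨μ', s', u, hptn', hsize', hdom', hs'u,
    lt_of_lt_of_le (isPtn_supp_lt hptn' (Finsupp.mem_support_iff.mpr (by omega)))
      (le_of_eq hsize'),
    by omega, hval_s', hval_u, hval_other, hpsum'⟩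

end Move
section Filling

lemma filling {ν : ℕ →₀ ℕ} (hν : IsPtn ν) {N : ℕ} (hNgt : ptnSize ν < N) :
    ∀ (d : ℕ) (μ : ℕ →₀ ℕ), IsPtn μ → ptnSize μ = ptnSize ν → (∀ j, psum ν j ≤ psum μ j) →
      (∑ j ∈ Finset.range (N + 1), (psum μ j - psum ν j)) = d →
      ∃ C : ℕ → Finset ℕ, (∀ t, C t ⊆ ν.support) ∧ (∀ t, (C t).card = colHtN N μ t) ∧
        (∀ i, ((Finset.range N).filter (fun t => i ∈ C t)).card = ν i) := by
  classical
  intro d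
  induction d using Nat.strong_induction_on with
  | _ d ih =>
    intro μ hμ hsize hdom hD
    rcases eq_or_ne μ ν with rfl | hne
    · -- base case: column filling of μ itself (ν has been substituted by μ)
      refine ⟨fun t => Finset.filter (fun i => t < μ i) μ.support,
        fun t => Finset.filter_subset _ _, ?_, ?_⟩
      · intro t
        rw [colHtN]
        congr 1
        ext r
        simp only [Finset.mem_filter, Finset.mem_range, Finsupp.mem_support_iff]
        by_cases h0 : μ r = 0
        · constructor
          · rintro ⟨h1, h2⟩; omega
          · rintro ⟨h1, h2⟩; omega
        · have hrN : r < N := lt_of_lt_of_le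
            (isPtn_supp_lt hμ (Finsupp.mem_support_iff.mpr h0)) (le_of_lt hNgt)
          constructor
          · rintro ⟨h1, h2⟩; exact ⟨hrN, h2⟩
          · rintro ⟨h1, h2⟩; exact ⟨h0, h2⟩
      · intro i
        by_cases hi : i ∈ μ.support
        · have h1 : (Finset.range N).filter
              (fun t => i ∈ Finset.filter (fun i' => t < μ i') μ.support)
              = Finset.range (μ i) := by
            ext t
            simp only [Finset.mem_filter, Finset.mem_range, Finsupp.mem_support_iff]
            constructor
            · rintro ⟨h2, h3, h4⟩; exact h4
            · intro h2
              refine ⟨?_, Finsupp.mem_support_iff.mp hi, h2⟩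
              have := part_le_ptnSize μ i
              omega
          rw [h1, Finset.card_range]
        · have h0 : μ i = 0 := Finsupp.notMem_support_iff.mp hi
          have h1 : (Finset.range N).filter
              (fun t => i ∈ Finset.filter (fun i' => t < μ i') μ.support)
              = ∅ := by
            ext t
            simp only [Finset.mem_filter, Finset.mem_range, Finset.notMem_empty, iff_false]
            rintro ⟨h2, h3, h4⟩
            omega
          rw [h1, h0, Finset.card_empty]
    · -- inductive step
      obtain ⟨μ', s', u, hptn', hsize', hdom', hs'u, huN, hgap, hval_s', hval_u, hval_o, hpsum'⟩ :=
        exists_move hμ hν hsize hdom hne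
      have hμ'le : ∀ j, psum μ' j ≤ psum μ j := fun j => by have := hpsum' j; omega
      have hd' : (∑ j ∈ Finset.range (N + 1), (psum μ' j - psum ν j)) < d := by
        rw [← hD]
        refine Finset.sum_lt_sum (fun j _ => by have := hμ'le j; omega) ⟨s' + 1, ?_, ?_⟩
        · rw [Finset.mem_range]; omega
        · have h1 := hpsum' (s' + 1)
          rw [if_pos ⟨by omega, by omega⟩] at h1
          have h2 := hdom' (s' + 1)
          omega
      obtain ⟨C, hC1, hC2, hC3⟩ := ih _ hd' μ' hptn' hsize' hdom' rfl
      set c1 := μ s' - 1 with hc1def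
      set c2 := μ u with hc2def
      have hμs'ub : μ s' ≤ ptnSize ν := by
        rw [← hsize]; exact part_le_ptnSize μ s'
      have hc2c1 : c2 < c1 := by omega
      have hc1N : c1 < N := by omega
      have hc2N : c2 < N := by omega
      have hs'N : s' < N := by omega
      have huN' : u < N := by omega
      -- column height bookkeeping
      have hcol : ∀ t, colHtN N μ' t + (if t = c1 then 1 else 0)
          = colHtN N μ t + (if t = c2 then 1 else 0) := by
        intro t
        have hsplit : ∀ (m : ℕ →₀ ℕ), colHtN N m t
            = (∑ r ∈ ((Finset.range N).erase s').erase u, if t < m r then 1 else 0)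
              + (if t < m u then 1 else 0) + (if t < m s' then 1 else 0) := by
          intro m
          rw [colHtN, Finset.card_filter]
          rw [← Finset.sum_erase_add (Finset.range N) _ (Finset.mem_range.mpr hs'N)]
          rw [← Finset.sum_erase_add ((Finset.range N).erase s') _
            (Finset.mem_erase.mpr ⟨by omega, Finset.mem_range.mpr huN'⟩)]
        rw [hsplit μ, hsplit μ']
        have hsame : ∑ r ∈ ((Finset.range N).erase s').erase u, (if t < μ' r then 1 else 0)
            = ∑ r ∈ ((Finset.range N).erase s').erase u, (if t < μ r then 1 else 0) := by
          refine Finset.sum_congr rfl fun r hr => ?_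
          have h1 := Finset.mem_erase.mp hr
          have h2 := Finset.mem_erase.mp h1.2
          rw [hval_o r h2.1 h1.1]
        rw [hsame, hval_u, hval_s']
        obtain ⟨SS, hSS⟩ : ∃ k, k = ∑ r ∈ ((Finset.range N).erase s').erase u,
          (if t < μ r then 1 else 0) := ⟨_, rfl⟩
        rw [← hSS]
        rw [hc1def, hc2def]
        split_ifs <;> omega
      -- the element to move
      have hcol_pos : 0 < colHtN N μ c1 := by
        refine (lt_colHtN_iff hμ (by omega : ptnSize μ ≤ N)).mpr ?_
        have h1 : μ s' ≤ μ 0 := isPtn_antitone hμ (Nat.zero_le s')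
        omega
      have hcard1 : (C c1).card = colHtN N μ c1 - 1 := by
        have h1 := hcol c1
        rw [if_pos rfl, if_neg (by omega)] at h1
        rw [hC2 c1]
        omega
      have hcard2 : (C c2).card = colHtN N μ c2 + 1 := by
        have h1 := hcol c2
        rw [if_neg (by omega), if_pos rfl] at h1
        rw [hC2 c2]
        omega
      have hanti : colHtN N μ c1 ≤ colHtN N μ c2 := colHtN_antitone N μ (by omega)
      have hlt : (C c1).card < (C c2).card := by omega
      have hex_i0 : ∃ i0 ∈ C c2, i0 ∉ C c1 := by
        by_contra hcon
        push_neg at hcon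
        have := Finset.card_le_card hcon
        omega
      obtain ⟨i0, hi0c2, hi0c1⟩ := hex_i0
      refine ⟨fun t => if t = c1 then insert i0 (C c1) else if t = c2 then (C c2).erase i0
        else C t, ?_, ?_, ?_⟩
      · intro t
        dsimp only
        split_ifs with h1 h2
        · exact Finset.insert_subset (hC1 c2 hi0c2) (hC1 c1)
        · exact (Finset.erase_subset _ _).trans (hC1 c2)
        · exact hC1 t
      · intro t
        dsimp only
        split_ifs with h1 h2
        · rw [Finset.card_insert_of_notMem hi0c1, h1]
          omega
        · rw [Finset.card_erase_of_mem hi0c2, h2]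
          omega
        · have h3 := hcol t
          rw [if_neg h1, if_neg h2] at h3
          rw [hC2 t]
          omega
      · intro i
        rcases eq_or_ne i i0 with heq | hii0
        · -- membership set: insert c1, remove c2
          subst heq
          have hset : (Finset.range N).filter (fun t => i ∈ (if t = c1 then insert i (C c1)
                else if t = c2 then (C c2).erase i else C t))
              = insert c1 (((Finset.range N).filter (fun t => i ∈ C t)).erase c2) := by
            ext t
            simp only [Finset.mem_filter, Finset.mem_insert, Finset.mem_erase, Finset.mem_range]
            rcases eq_or_ne t c1 with rfl | h1
            · simp [hc1N]
            · rw [if_neg h1]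
              rcases eq_or_ne t c2 with rfl | h2
              · simp [h1, Finset.mem_erase]
              · rw [if_neg h2]
                constructor
                · rintro ⟨h3, h4⟩; exact Or.inr ⟨h2, h3, h4⟩
                · rintro (h3 | ⟨h3, h4, h5⟩)
                  · exact absurd h3 h1
                  · exact ⟨h4, h5⟩
          rw [hset]
          have hc1notin : c1 ∉ ((Finset.range N).filter (fun t => i ∈ C t)).erase c2 := by
            intro h
            have := (Finset.mem_filter.mp (Finset.mem_of_mem_erase h)).2
            exact hi0c1 this
          rw [Finset.card_insert_of_notMem hc1notin]
          have hc2in : c2 ∈ (Finset.range N).filter (fun t => i ∈ C t) :=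
            Finset.mem_filter.mpr ⟨Finset.mem_range.mpr hc2N, hi0c2⟩
          rw [Finset.card_erase_of_mem hc2in]
          have h4 := hC3 i
          have h5 : 0 < ((Finset.range N).filter (fun t => i ∈ C t)).card :=
            Finset.card_pos.mpr ⟨c2, hc2in⟩
          omega
        · have hset : (Finset.range N).filter (fun t => i ∈ (if t = c1 then insert i0 (C c1)
                else if t = c2 then (C c2).erase i0 else C t))
              = (Finset.range N).filter (fun t => i ∈ C t) := by
            refine Finset.filter_congr fun t _ => ?_
            rcases eq_or_ne t c1 with rfl | h1
            · simp [Finset.mem_insert, hii0]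
            · rw [if_neg h1]
              rcases eq_or_ne t c2 with rfl | h2
              · simp [Finset.mem_erase, hii0]
              · rw [if_neg h2]
          rw [hset, hC3 i]

end Filling
section Construct

variable {F : Type} [Field F] {n : ℕ}

lemma construct (Δ : Matrix (Fin n) (Fin n) F) {ν : ℕ →₀ ℕ} (hν : IsPtn ν)
    (hΔ : DiagOfType Δ ν) (hνn : ptnSize ν = n) {μ : ℕ →₀ ℕ} (hμ : IsPtn μ)
    (hμn : ptnSize μ = n) (hdom : ∀ j, psum ν j ≤ psum μ j) :
    ∃ W, HasProfile Δ μ W := by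
  classical
  obtain ⟨a, hinj, htop, hdim⟩ := hΔ
  set L := Δ.mulVecLin with hL
  set N := n + 1 with hN
  have hsize : ptnSize μ = ptnSize ν := by rw [hμn, hνn]
  have hNgt : ptnSize ν < N := by omega
  have hμN : ptnSize μ ≤ N := by omega
  obtain ⟨C, hC1, hC2, hC3⟩ := filling hν hNgt _ μ hμ hsize hdom rfl
  -- the internal direct sum of eigenspaces
  set ι := {i : ℕ // i ∈ ν.support} with hι
  set Esub : ι → Submodule F (Fin n → F) :=
    fun i => Module.End.eigenspace L (a i.val) with hEsub
  have hainj : Function.Injective (fun i : ι => a i.val) := by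
    intro x y h
    exact Subtype.ext (hinj x.2 y.2 h)
  have hindep : iSupIndep Esub :=
    (Module.End.eigenspaces_iSupIndep L).comp hainj
  have hsup : ⨆ i : ι, Esub i = ⊤ := by
    rw [eq_top_iff, ← htop]
    refine iSup_le fun s => iSup_le fun hs => ?_
    exact le_iSup Esub ⟨s, hs⟩
  have internal : DirectSum.IsInternal Esub :=
    (DirectSum.isInternal_submodule_iff_iSupIndep_and_iSup_eq_top Esub).mpr ⟨hindep, hsup⟩
  -- bases of the eigenspaces indexed by the columns using each eigenvalue
  set T : ι → Finset ℕ := fun i => (Finset.range N).filter (fun t => i.val ∈ C t) with hT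
  have hTcard : ∀ i : ι, (T i).card = ν i.val := fun i => hC3 i.val
  have hfr : ∀ i : ι, (T i).card = Module.finrank F ↥(Esub i) := by
    intro i
    rw [hTcard i, hdim i.val i.2]
  set b : ∀ i : ι, Basis ↥(T i) F ↥(Esub i) :=
    fun i => (Module.finBasis F ↥(Esub i)).reindex (Finset.equivFinOfCardEq (hfr i)).symm
    with hb
  set B := internal.collectedBasis b with hB
  have hBmem : ∀ σ : (Σ i : ι, ↥(T i)), (B σ : Fin n → F) ∈ Esub σ.1 :=
    fun σ => internal.collectedBasis_mem b σ
  have hBeig : ∀ (σ : Σ i : ι, ↥(T i)) (m : ℕ),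
      (L ^ m) (B σ) = (a σ.1.val) ^ m • B σ := fun σ m => pow_eigen (hBmem σ) m
  have hTmem : ∀ (σ : Σ i : ι, ↥(T i)), (σ.2 : ℕ) ∈ Finset.range N ∧ σ.1.val ∈ C (σ.2 : ℕ) :=
    fun σ => Finset.mem_filter.mp σ.2.2
  -- the vectors and the subspace
  set v : ℕ → (Fin n → F) := fun t =>
    ∑ σ ∈ Finset.univ.filter (fun σ : (Σ i : ι, ↥(T i)) => (σ.2 : ℕ) = t), B σ with hv
  set W := Submodule.span F (v '' ↑(Finset.range N)) with hW
  have hvW : ∀ t ∈ Finset.range N, v t ∈ W :=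
    fun t ht => Submodule.subset_span ⟨t, Finset.mem_coe.mpr ht, rfl⟩
  -- action of powers of L on v t
  have hLv : ∀ (m : ℕ) (t : ℕ), (L ^ m) (v t)
      = ∑ σ ∈ Finset.univ.filter (fun σ : (Σ i : ι, ↥(T i)) => (σ.2 : ℕ) = t),
          (a σ.1.val) ^ m • B σ := by
    intro m t
    rw [hv]
    rw [map_sum]
    exact Finset.sum_congr rfl fun σ _ => hBeig σ m
  -- the annihilator polynomial of v t
  have hann : ∀ t, (Polynomial.aeval L) (∏ i ∈ C t, (Polynomial.X - Polynomial.C (a i))) (v t)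
      = 0 := by
    intro t
    rw [hv, map_sum]
    refine Finset.sum_eq_zero fun σ hσ => ?_
    have hσ2 : (σ.2 : ℕ) = t := (Finset.mem_filter.mp hσ).2
    have hroot : σ.1.val ∈ C t := hσ2 ▸ (hTmem σ).2
    rw [aeval_eigen (hBmem σ)]
    have : Polynomial.eval (a σ.1.val) (∏ i ∈ C t, (Polynomial.X - Polynomial.C (a i))) = 0 := by
      rw [Polynomial.eval_prod]
      refine Finset.prod_eq_zero hroot ?_
      simp
    rw [this, zero_smul]
  -- span stability
  have hSt : ∀ t, ∀ m : ℕ, (L ^ m) (v t) ∈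
      Submodule.span F ((fun m' => (L ^ m') (v t)) '' ↑(Finset.range ((C t).card))) := by
    intro t
    set h := (C t).card with hh
    set St := Submodule.span F ((fun m' => (L ^ m') (v t)) '' ↑(Finset.range h)) with hSt
    rcases Nat.eq_zero_or_pos h with h0 | hpos
    · -- C t is empty, so v t = 0
      have hempty : C t = ∅ := Finset.card_eq_zero.mp h0
      have hv0 : v t = 0 := by
        rw [hv]
        refine Finset.sum_eq_zero fun σ hσ => ?_
        exfalso
        have hσ2 : (σ.2 : ℕ) = t := (Finset.mem_filter.mp hσ).2
        have := hσ2 ▸ (hTmem σ).2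
        rw [hempty] at this
        exact Finset.notMem_empty _ this
      intro m
      rw [hv0, map_zero]
      exact Submodule.zero_mem _
    · -- monic annihilator of degree h
      set p := ∏ i ∈ C t, (Polynomial.X - Polynomial.C (a i)) with hp
      have hmonic : p.Monic := Polynomial.monic_prod_of_monic _ _
        (fun i _ => Polynomial.monic_X_sub_C _)
      have hdeg : p.natDegree = h := by
        rw [hp, Polynomial.natDegree_prod _ _ (fun i _ => Polynomial.X_sub_C_ne_zero _)]
        simp [Polynomial.natDegree_X_sub_C, hh]
      have hgen : ∀ m' < h, (L ^ m') (v t) ∈ St :=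
        fun m' hm' => Submodule.subset_span ⟨m', by simpa using hm', rfl⟩
      have hhmem : (L ^ h) (v t) ∈ St := by
        have h1 : (Polynomial.aeval L) p (v t) = 0 := hann t
        rw [Polynomial.aeval_eq_sum_range' (n := h + 1) (by omega)] at h1
        rw [Finset.sum_range_succ] at h1
        have hch : p.coeff h = 1 := by
          have := hmonic.coeff_natDegree
          rwa [hdeg] at this
        rw [hch, one_smul] at h1
        rw [LinearMap.add_apply] at h1
        have h2 : (∑ m' ∈ Finset.range h, p.coeff m' • L ^ m') (v t) + (L ^ h) (v t) = 0 := h1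
        have h3 : (∑ m' ∈ Finset.range h, p.coeff m' • L ^ m') (v t) ∈ St := by
          simp only [LinearMap.coe_sum, Finset.sum_apply, LinearMap.smul_apply]
          exact Submodule.sum_mem _ fun m' hm' =>
            Submodule.smul_mem _ _ (hgen m' (Finset.mem_range.mp hm'))
        have h4 : (L ^ h) (v t) = -((∑ m' ∈ Finset.range h, p.coeff m' • L ^ m') (v t)) :=
          eq_neg_of_add_eq_zero_right h2
        rw [h4]
        exact Submodule.neg_mem _ h3
      have hinv : ∀ x ∈ St, L x ∈ St := by
        intro x hx
        induction hx using Submodule.span_induction with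
        | mem y hy =>
            obtain ⟨m', hm', rfl⟩ := hy
            have hm'' : m' < h := by simpa using hm'
            have : L ((L ^ m') (v t)) = (L ^ (m' + 1)) (v t) := by
              rw [pow_succ']
              rfl
            rw [this]
            rcases Nat.lt_or_ge (m' + 1) h with h5 | h5
            · exact hgen _ h5
            · have : m' + 1 = h := by omega
              rw [this]
              exact hhmem
        | zero => rw [map_zero]; exact Submodule.zero_mem _
        | add y z _ _ hy hz => rw [map_add]; exact Submodule.add_mem _ hy hz
        | smul c y _ hy => rw [_root_.map_smul]; exact Submodule.smul_mem _ _ hy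
      intro m
      induction m with
      | zero => exact hgen 0 hpos
      | succ k ihk =>
          have : (L ^ (k + 1)) (v t) = L ((L ^ k) (v t)) := by
            rw [pow_succ']
            rfl
          rw [this]
          exact hinv _ ihk

  -- description of iterSpan as a span of an explicit family
  have hiter : ∀ j : ℕ, iterSpan Δ W j = Submodule.span F
      ((fun x : (_ : ℕ) × ℕ => (L ^ x.2) (v x.1)) ''
        ↑((Finset.range N).sigma (fun t => Finset.range (min j (colHtN N μ t))))) := by
    intro j
    apply le_antisymm
    · rw [iterSpan_eq_end]
      refine iSup_le fun m => iSup_le fun hm => ?_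
      rw [hW, Submodule.map_span, Submodule.span_le]
      rintro y ⟨z, hz, rfl⟩
      obtain ⟨t, ht, rfl⟩ := hz
      have ht' : t ∈ Finset.range N := Finset.mem_coe.mp ht
      by_cases hc : m < min j (colHtN N μ t)
      · exact Submodule.subset_span ⟨⟨t, m⟩, Finset.mem_coe.mpr
          (Finset.mem_sigma.mpr ⟨ht', Finset.mem_range.mpr hc⟩), rfl⟩
      · have hmj : m < j := Finset.mem_range.mp hm
        have hhm : colHtN N μ t ≤ m := by omega
        have h1 := hSt t m
        rw [hC2 t] at h1
        refine Submodule.span_mono ?_ h1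
        rintro x ⟨m', hm', rfl⟩
        have hm'' : m' < colHtN N μ t := Finset.mem_coe.mp hm' |> Finset.mem_range.mp
        refine ⟨⟨t, m'⟩, Finset.mem_coe.mpr
          (Finset.mem_sigma.mpr ⟨ht', Finset.mem_range.mpr ?_⟩), rfl⟩
        show m' < min j (colHtN N μ t)
        omega
    · rw [Submodule.span_le]
      rintro y ⟨x, hx, rfl⟩
      have hx' := Finset.mem_sigma.mp (Finset.mem_coe.mp hx)
      exact mem_iterSpan_of Δ W
        (lt_of_lt_of_le (Finset.mem_range.mp hx'.2) (min_le_left _ _)) (hvW x.1 hx'.1)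
  -- linear independence of the family
  have hindepu : ∀ j : ℕ, LinearIndependent F
      (fun x : ↥((Finset.range N).sigma (fun t => Finset.range (min j (colHtN N μ t)))) =>
        (L ^ (x : (_ : ℕ) × ℕ).2) (v (x : (_ : ℕ) × ℕ).1)) := by
    intro j
    set IJ := (Finset.range N).sigma (fun t => Finset.range (min j (colHtN N μ t))) with hIJ
    rw [Fintype.linearIndependent_iff]
    intro g hsum
    set G : ((_ : ℕ) × ℕ) → F := fun y => if h : y ∈ IJ then g ⟨y, h⟩ else 0 with hG
    set c : (Σ i : ι, ↥(T i)) → F := fun σ =>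
      ∑ m ∈ Finset.range (min j (colHtN N μ (σ.2 : ℕ))), G ⟨(σ.2 : ℕ), m⟩ * (a σ.1.val) ^ m
      with hc
    have key : ∑ σ : (Σ i : ι, ↥(T i)), c σ • (B σ : Fin n → F) = 0 := by
      rw [← hsum]
      have e1 : ∑ x : ↥IJ, g x • (L ^ (x : (_ : ℕ) × ℕ).2) (v (x : (_ : ℕ) × ℕ).1)
          = ∑ y ∈ IJ, G y • (L ^ y.2) (v y.1) := by
        rw [Finset.univ_eq_attach, ← Finset.sum_attach IJ (fun y => G y • (L ^ y.2) (v y.1))]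
        refine Finset.sum_congr rfl fun x _ => ?_
        rw [hG]
        simp only [dif_pos x.2]
      have e2 : ∑ y ∈ IJ, G y • (L ^ y.2) (v y.1)
          = ∑ t ∈ Finset.range N, ∑ m ∈ Finset.range (min j (colHtN N μ t)),
              G ⟨t, m⟩ • (L ^ m) (v t) := Finset.sum_sigma _ _ _
      have e3 : ∀ t, ∑ m ∈ Finset.range (min j (colHtN N μ t)), G ⟨t, m⟩ • (L ^ m) (v t)
          = ∑ σ ∈ Finset.univ.filter (fun σ : (Σ i : ι, ↥(T i)) => (σ.2 : ℕ) = t),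
              c σ • (B σ : Fin n → F) := by
        intro t
        have e4 : ∀ m, G ⟨t, m⟩ • (L ^ m) (v t)
            = ∑ σ ∈ Finset.univ.filter (fun σ : (Σ i : ι, ↥(T i)) => (σ.2 : ℕ) = t),
                (G ⟨t, m⟩ * (a σ.1.val) ^ m) • B σ := by
          intro m
          rw [hLv m t, Finset.smul_sum]
          exact Finset.sum_congr rfl fun σ _ => smul_smul _ _ _
        rw [Finset.sum_congr rfl fun m _ => e4 m, Finset.sum_comm]
        refine Finset.sum_congr rfl fun σ hσ => ?_
        have hσ2 : (σ.2 : ℕ) = t := (Finset.mem_filter.mp hσ).2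
        rw [← Finset.sum_smul]
        congr 1
        simp only [hc]
        rw [hσ2]
      rw [e1, e2, Finset.sum_congr rfl fun t _ => e3 t]
      exact (Finset.sum_fiberwise_of_maps_to (fun σ _ => (hTmem σ).1) _).symm
    have hc0 : ∀ σ, c σ = 0 :=
      Fintype.linearIndependent_iff.mp B.linearIndependent c key
    intro x
    obtain ⟨⟨t, m⟩, hxIJ⟩ := x
    have hx' := Finset.mem_sigma.mp hxIJ
    have htN : t ∈ Finset.range N := hx'.1
    have hmK : m < min j (colHtN N μ t) := Finset.mem_range.mp hx'.2
    set K := min j (colHtN N μ t) with hK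
    have hcard_pos : 0 < (C t).card := by
      rw [hC2 t]; omega
    set q : Polynomial F := ∑ m' ∈ Finset.range K, Polynomial.monomial m' (G ⟨t, m'⟩) with hq
    have hqdeg : q.natDegree < K := by
      have h1 : q.natDegree ≤ K - 1 :=
        Polynomial.natDegree_sum_le_of_forall_le _ _ fun m' hm' =>
          le_trans (Polynomial.natDegree_monomial_le _) (by
            have := Finset.mem_range.mp hm'; omega)
      omega
    have hroots : ∀ z ∈ (C t).image a, q.eval z = 0 := by
      intro z hz
      obtain ⟨i, hiC, rfl⟩ := Finset.mem_image.mp hz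
      have hisupp : i ∈ ν.support := hC1 t hiC
      set σ : Σ i' : ι, ↥(T i') :=
        ⟨⟨i, hisupp⟩, ⟨t, Finset.mem_filter.mpr ⟨htN, hiC⟩⟩⟩ with hσdef
      have h1 : c σ = 0 := hc0 σ
      rw [hc] at h1
      rw [hq, Polynomial.eval_finset_sum]
      have h2 : ∀ m' ∈ Finset.range K, Polynomial.eval (a i) (Polynomial.monomial m' (G ⟨t, m'⟩))
          = G ⟨t, m'⟩ * (a i) ^ m' := fun m' _ => Polynomial.eval_monomial
      rw [Finset.sum_congr rfl h2]
      exact h1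
    have himg : ((C t).image a).card = (C t).card := by
      refine Finset.card_image_of_injOn (hinj.mono ?_)
      intro x hx
      exact hC1 t hx
    have hq0 : q = 0 := by
      refine Polynomial.eq_zero_of_natDegree_lt_card_of_eval_eq_zero' q ((C t).image a)
        hroots ?_
      rw [himg]
      rw [hC2 t]
      omega
    have hcoeff : q.coeff m = G ⟨t, m⟩ := by
      rw [hq, Polynomial.finset_sum_coeff]
      have h3 : ∀ m' ∈ Finset.range K, (Polynomial.monomial m' (G ⟨t, m'⟩)).coeff m
          = if m' = m then G ⟨t, m'⟩ else 0 := fun m' _ => Polynomial.coeff_monomial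
      rw [Finset.sum_congr rfl h3, Finset.sum_ite_eq' (Finset.range K) m (fun m' => G ⟨t, m'⟩),
        if_pos (Finset.mem_range.mpr hmK)]
    have hgx : G ⟨t, m⟩ = g ⟨⟨t, m⟩, hxIJ⟩ := by
      rw [hG]
      simp only [dif_pos hxIJ]
    rw [← hgx, ← hcoeff, hq0]
    simp
  -- conclusion
  refine ⟨W, fun j => ?_⟩
  have h2 : ((fun x : (_ : ℕ) × ℕ => (L ^ x.2) (v x.1)) ''
        ↑((Finset.range N).sigma (fun t => Finset.range (min (j + 1) (colHtN N μ t)))))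
      = Set.range (fun x : ↥((Finset.range N).sigma
          (fun t => Finset.range (min (j + 1) (colHtN N μ t)))) =>
          (L ^ (x : (_ : ℕ) × ℕ).2) (v (x : (_ : ℕ) × ℕ).1)) := Set.image_eq_range _ _
  rw [hiter (j + 1), h2, finrank_span_eq_card (hindepu (j + 1)),
    Fintype.card_coe, Finset.card_sigma]
  have h1 : ∀ t ∈ Finset.range N, (Finset.range (min (j + 1) (colHtN N μ t))).card
      = min (j + 1) (colHtN N μ t) := fun t _ => Finset.card_range _
  rw [Finset.sum_congr rfl h1]
  exact colHt_sum hμ hμN (j + 1)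

end Construct

/-- For a diagonalizable matrix `Δ` of type `ν` and a partition `μ` of `n`,
`σ(μ,Δ) > 0` iff `μ` dominates `ν`. -/
theorem statement12 (q : ℕ) (hq : IsPrimePow q) (n : ℕ) (hn : 0 < n)
    (μ ν : ℕ →₀ ℕ) (hμ : IsPtn μ) (hν : IsPtn ν)
    (hμn : ptnSize μ = n) (hνn : ptnSize ν = n)
    (F : Type) [Field F] [Fintype F] (hF : Fintype.card F = q)
    (Δ : Matrix (Fin n) (Fin n) F) (hΔ : DiagOfType Δ ν) :
    0 < sigmaProf μ Δ ↔
      ∀ j : ℕ, ∑ i ∈ Finset.range j, ν i ≤ ∑ i ∈ Finset.range j, μ i := by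
  constructor
  · intro hpos
    obtain ⟨W, hW⟩ := (sigmaProf_pos_iff μ Δ).mp hpos
    exact forward_dominance Δ hΔ hμn hW
  · intro hdom
    rw [sigmaProf_pos_iff]
    exact construct Δ hν hΔ hνn hμ hμn (fun j => hdom j)
end

section
/- Let q be a prime power, n a positive integer, Δ ∈ M_n(𝔽_q), and let μ = (μ1,…,μ_k) be a partition with k parts (μ_k ≥ 1 allowed to be the last nonzero part) and |μ| ≤ n. Set m_i = μ1 + ⋯ + μ_i for 1 ≤ i ≤ k. Then σ(μ,Δ) equals the number of chains W_1 ⊇ W_2 ⊇ ⋯ ⊇ W_k of subspaces of 𝔽_q^n satisfying: (i) dim W_i = m_{k+1−i} for 1 ≤ i ≤ k; (ii) dim(W_1 ∩ Δ^{−1}W_1) = m_k, and dim(W_i ∩ Δ^{−1}W_i) = m_{k+1−i} − μ_{k+2−i} for 2 ≤ i ≤ k; and (iii) W_{i+1} ⊆ W_i ∩ Δ^{−1}W_i for 1 ≤ i ≤ k−1. Here Δ^{−1}W denotes the preimage {v ∈ 𝔽_q^n : Δv ∈ W}. -/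
open Matrix Module Polynomial

attribute [local instance] Classical.propDecidable

section Aux

variable {F : Type} [Field F] {n : ℕ} (Δ : Matrix (Fin n) (Fin n) F)
  (W : Submodule F (Fin n → F))

lemma iterSpan_zero : iterSpan Δ W 0 = ⊥ := by simp [iterSpan]

lemma iterSpan_succ_top (j : ℕ) :
    iterSpan Δ W (j+1) = W.map (Δ^j).mulVecLin ⊔ iterSpan Δ W j := by
  rw [iterSpan, iterSpan, Finset.range_add_one, Finset.iSup_insert]

lemma iterSpan_succ (j : ℕ) :
    iterSpan Δ W (j+1) = W ⊔ (iterSpan Δ W j).map Δ.mulVecLin := by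
  induction j with
  | zero => simp [iterSpan_succ_top, iterSpan_zero, Matrix.mulVecLin_one]
  | succ j ih =>
    rw [iterSpan_succ_top Δ W (j+1)]
    conv_rhs => rw [iterSpan_succ_top Δ W j]
    rw [ih, Submodule.map_sup, pow_succ', Matrix.mulVecLin_mul, Submodule.map_comp,
      sup_left_comm]

lemma iterSpan_mono {j j' : ℕ} (h : j ≤ j') : iterSpan Δ W j ≤ iterSpan Δ W j' := by
  apply biSup_mono
  intro i hi
  simp only [Finset.mem_range] at *
  omega

lemma iterSpan_one : iterSpan Δ W 1 = W := by
  rw [iterSpan_succ, iterSpan_zero]; simp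

lemma le_iterSpan {j : ℕ} (hj : 1 ≤ j) : W ≤ iterSpan Δ W j :=
  le_trans (le_of_eq (iterSpan_one Δ W).symm) (iterSpan_mono Δ W hj)

lemma map_iterSpan_le (j : ℕ) :
    (iterSpan Δ W j).map Δ.mulVecLin ≤ iterSpan Δ W (j+1) := by
  rw [iterSpan_succ]; exact le_sup_right

lemma iterSpan_succ_sup {j : ℕ} (hj : 1 ≤ j) :
    iterSpan Δ W (j+1) = iterSpan Δ W j ⊔ (iterSpan Δ W j).map Δ.mulVecLin := by
  refine le_antisymm ?_ (sup_le (iterSpan_mono Δ W (Nat.le_succ j)) (map_iterSpan_le Δ W j))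
  rw [iterSpan_succ]
  exact sup_le (le_trans (le_iterSpan Δ W hj) le_sup_left) le_sup_right

lemma rank_lemma (L : (Fin n → F) →ₗ[F] (Fin n → F)) (U : Submodule F (Fin n → F)) :
    Module.finrank F ↥(U ⊔ U.map L) + Module.finrank F ↥(U ⊓ U.comap L)
      = 2 * Module.finrank F ↥U := by
  classical
  set f : U →ₗ[F] (Fin n → F) ⧸ U := U.mkQ ∘ₗ (L ∘ₗ U.subtype) with hf
  have h1 : Module.finrank F ↥(LinearMap.range f) + Module.finrank F ↥(LinearMap.ker f)
      = Module.finrank F ↥U := LinearMap.finrank_range_add_finrank_ker f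
  have hker : LinearMap.ker f = Submodule.comap U.subtype (U ⊓ U.comap L) := by
    ext x
    simp only [hf, LinearMap.mem_ker, LinearMap.comp_apply, Submodule.mkQ_apply,
      Submodule.Quotient.mk_eq_zero, Submodule.mem_comap, Submodule.mem_inf,
      Submodule.subtype_apply]
    exact ⟨fun h => ⟨x.2, h⟩, fun h => h.2⟩
  have hker2 : Module.finrank F ↥(LinearMap.ker f) = Module.finrank F ↥(U ⊓ U.comap L) := by
    rw [hker]
    exact (Submodule.comapSubtypeEquivOfLe inf_le_left).finrank_eq
  have hrange : LinearMap.range f = (U ⊔ U.map L).map U.mkQ := by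
    rw [Submodule.map_sup, Submodule.mkQ_map_self, bot_sup_eq, hf, LinearMap.range_comp,
      LinearMap.range_comp, Submodule.range_subtype]
  set g : ↥(U ⊔ U.map L) →ₗ[F] (Fin n → F) ⧸ U := U.mkQ ∘ₗ (U ⊔ U.map L).subtype with hg
  have h2 : Module.finrank F ↥(LinearMap.range g) + Module.finrank F ↥(LinearMap.ker g)
      = Module.finrank F ↥(U ⊔ U.map L) := LinearMap.finrank_range_add_finrank_ker g
  have hgr : LinearMap.range g = (U ⊔ U.map L).map U.mkQ := by
    rw [hg, LinearMap.range_comp, Submodule.range_subtype]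
  have hgk : LinearMap.ker g = Submodule.comap (U ⊔ U.map L).subtype U := by
    ext x
    simp [hg, Submodule.Quotient.mk_eq_zero]
  have hgk2 : Module.finrank F ↥(LinearMap.ker g) = Module.finrank F ↥U := by
    rw [hgk]
    exact (Submodule.comapSubtypeEquivOfLe le_sup_left).finrank_eq
  rw [hrange] at h1
  rw [hgr] at h2
  omega

variable {μ : ℕ →₀ ℕ}

lemma ptn_anti (hμ : IsPtn μ) : ∀ {i j : ℕ}, i ≤ j → μ j ≤ μ i := by
  intro i j hij
  induction hij with
  | refl => exact le_rfl
  | step _ ih => exact le_trans (hμ _) ih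

lemma mu_le_sum (hμ : IsPtn μ) {j : ℕ} (hj : 1 ≤ j) :
    μ j ≤ ∑ i ∈ Finset.range j, μ i :=
  le_trans (ptn_anti hμ (by omega : j - 1 ≤ j))
    (Finset.single_le_sum (fun i _ => Nat.zero_le _) (Finset.mem_range.2 (by omega)))

lemma profile_finrank (hW : HasProfile Δ μ W) {j : ℕ} (hj : 1 ≤ j) :
    Module.finrank F ↥(iterSpan Δ W j) = ∑ i ∈ Finset.range j, μ i := by
  obtain ⟨j', rfl⟩ : ∃ j', j = j' + 1 := ⟨j - 1, by omega⟩
  exact hW j'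

lemma profile_inf (hμ : IsPtn μ) (hW : HasProfile Δ μ W) {j : ℕ} (hj : 1 ≤ j) :
    Module.finrank F ↥(iterSpan Δ W j ⊓ (iterSpan Δ W j).comap Δ.mulVecLin)
      = (∑ i ∈ Finset.range j, μ i) - μ j := by
  have hA := rank_lemma Δ.mulVecLin (iterSpan Δ W j)
  rw [← iterSpan_succ_sup Δ W hj] at hA
  have h1 := profile_finrank Δ W hW hj
  have h2 := hW j
  rw [Finset.sum_range_succ] at h2
  have h3 := mu_le_sum hμ hj
  omega

lemma profile_invariant {k : ℕ} (hk : 0 < k) (hμk : ∀ i, k ≤ i → μ i = 0)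
    (hW : HasProfile Δ μ W) :
    (iterSpan Δ W k).map Δ.mulVecLin ≤ iterSpan Δ W k := by
  have heq : iterSpan Δ W k = iterSpan Δ W (k+1) := by
    apply Submodule.eq_of_le_of_finrank_le (iterSpan_mono Δ W (by omega : k ≤ k + 1))
    have h1 := profile_finrank Δ W hW hk
    have h2 := hW k
    rw [Finset.sum_range_succ, hμk k le_rfl] at h2
    omega
  conv_rhs => rw [heq]
  exact map_iterSpan_le Δ W k

lemma fin_congr {k : ℕ} {α : Type*} (c : Fin k → α) {a b : ℕ} (h : a = b)
    (ha : a < k) : c ⟨a, ha⟩ = c ⟨b, h ▸ ha⟩ := by subst h; rfl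

end Aux

section Chain

variable {F : Type} [Field F] {n : ℕ} (Δ : Matrix (Fin n) (Fin n) F)
  {μ : ℕ →₀ ℕ} {k : ℕ} (hk : 0 < k) (c : Fin k → Submodule F (Fin n → F))

set_option maxHeartbeats 1000000 in
lemma chain_claim (hμ : IsPtn μ)
    (hA : ∀ t : Fin k, Module.finrank F (c t) = ∑ j ∈ Finset.range (k - (t : ℕ)), μ j)
    (hC : ∀ t : Fin k, 1 ≤ (t : ℕ) →
      Module.finrank F ↥(c t ⊓ Submodule.comap Δ.mulVecLin (c t)) =
        (∑ j ∈ Finset.range (k - (t : ℕ)), μ j) - μ (k - (t : ℕ)))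
    (hD : ∀ (t : ℕ) (h : t + 1 < k),
      c ⟨t + 1, h⟩ ≤ c ⟨t, by omega⟩ ⊓ Submodule.comap Δ.mulVecLin (c ⟨t, by omega⟩)) :
    ∀ j (h1 : 1 ≤ j) (hjk : j ≤ k),
      iterSpan Δ (c ⟨k - 1, by omega⟩) j = c ⟨k - j, by omega⟩ := by
  intro j
  induction j with
  | zero => intro h1; exact absurd h1 (by omega)
  | succ j ih =>
    intro h1 hjk
    rcases Nat.lt_or_ge j 1 with hj | hj
    · -- j = 0
      have hj0 : j = 0 := by omega
      subst hj0
      rw [iterSpan_one]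
    · rw [iterSpan_succ_sup Δ _ hj, ih hj (by omega)]
      set t : Fin k := ⟨k - j, by omega⟩ with ht
      have htv : (t : ℕ) = k - j := rfl
      have hkk : k - (k - j) = j := by omega
      have hD' := hD (k - (j+1)) (by omega)
      rw [fin_congr c (by omega : k - (j+1) + 1 = k - j)] at hD'
      have hsub : c t ⊔ (c t).map Δ.mulVecLin ≤ c ⟨k - (j+1), by omega⟩ := by
        refine sup_le (le_trans hD' inf_le_left) ?_
        refine Submodule.map_le_iff_le_comap.2 (le_trans hD' inf_le_right)
      apply Submodule.eq_of_le_of_finrank_le hsub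
      have hR := rank_lemma Δ.mulVecLin (c t)
      have hCt := hC t (by rw [htv]; omega)
      rw [htv, hkk] at hCt
      have hAt := hA t
      rw [htv, hkk] at hAt
      have hA' := hA ⟨k - (j+1), by omega⟩
      have e : k - ((⟨k - (j+1), by omega⟩ : Fin k) : ℕ) = j + 1 := by simp; omega
      rw [e, Finset.sum_range_succ] at hA'
      have hmu := mu_le_sum hμ hj
      omega

set_option maxHeartbeats 1000000 in
lemma chain_profile (hμ : IsPtn μ) (hμk : ∀ i, k ≤ i → μ i = 0)
    (hA : ∀ t : Fin k, Module.finrank F (c t) = ∑ j ∈ Finset.range (k - (t : ℕ)), μ j)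
    (hB : Module.finrank F
        ↥(c ⟨0, hk⟩ ⊓ Submodule.comap Δ.mulVecLin (c ⟨0, hk⟩)) = ∑ j ∈ Finset.range k, μ j)
    (hC : ∀ t : Fin k, 1 ≤ (t : ℕ) →
      Module.finrank F ↥(c t ⊓ Submodule.comap Δ.mulVecLin (c t)) =
        (∑ j ∈ Finset.range (k - (t : ℕ)), μ j) - μ (k - (t : ℕ)))
    (hD : ∀ (t : ℕ) (h : t + 1 < k),
      c ⟨t + 1, h⟩ ≤ c ⟨t, by omega⟩ ⊓ Submodule.comap Δ.mulVecLin (c ⟨t, by omega⟩)) :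
    HasProfile Δ μ (c ⟨k - 1, by omega⟩) := by
  have hA0 : Module.finrank F (c ⟨0, hk⟩) = ∑ j ∈ Finset.range k, μ j := by
    simpa using hA ⟨0, hk⟩
  have hinv : (c ⟨0, hk⟩).map Δ.mulVecLin ≤ c ⟨0, hk⟩ := by
    have heq : c ⟨0, hk⟩ ⊓ Submodule.comap Δ.mulVecLin (c ⟨0, hk⟩) = c ⟨0, hk⟩ :=
      Submodule.eq_of_le_of_finrank_le inf_le_left (le_of_eq (by rw [hB, hA0]))
    exact Submodule.map_le_iff_le_comap.2 (inf_eq_left.1 heq)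
  have hclaim := chain_claim Δ hk c hμ hA hC hD
  have hstable : ∀ m, k ≤ m → iterSpan Δ (c ⟨k - 1, by omega⟩) m = c ⟨0, hk⟩ := by
    intro m hm
    induction m, hm using Nat.le_induction with
    | base => rw [hclaim k hk le_rfl, fin_congr c (by omega : k - k = 0)]
    | succ m hm ih =>
      rw [iterSpan_succ_sup Δ _ (by omega), ih]
      exact sup_eq_left.2 hinv
  intro j
  rcases Nat.lt_or_ge j k with hjk | hjk
  · rw [hclaim (j+1) (by omega) (by omega), hA ⟨k - (j+1), by omega⟩]
    have e : k - ((⟨k - (j+1), by omega⟩ : Fin k) : ℕ) = j + 1 := by simp; omega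
    rw [e]
  · rw [hstable (j+1) (by omega), hA0]
    exact Finset.sum_subset (Finset.range_subset_range.2 (by omega))
      (fun x _ hx => hμk x (by simp only [Finset.mem_range] at hx; omega))

end Chain


set_option maxHeartbeats 4000000 in
/-- `σ(μ,Δ)` equals the number of chains `W_1 ⊇ ⋯ ⊇ W_k` with the
prescribed dimensions of `W_i` and of `W_i ∩ Δ⁻¹W_i`, where (0-indexed) `W t` corresponds
to `W_{t+1}` and `m i = μ₁ + ⋯ + μ_i = ∑_{j<i} μ j`. -/
theorem statement14 (q : ℕ) (hq : IsPrimePow q) (n : ℕ) (hn : 0 < n)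
    (F : Type) [Field F] [Fintype F] (hF : Fintype.card F = q)
    (Δ : Matrix (Fin n) (Fin n) F)
    (μ : ℕ →₀ ℕ) (hμ : IsPtn μ) (hsize : ptnSize μ ≤ n)
    (k : ℕ) (hk : 0 < k) (hμk : ∀ i, k ≤ i → μ i = 0) :
    sigmaProf μ Δ =
      Nat.card {W : Fin k → Submodule F (Fin n → F) //
        (∀ t : Fin k,
          Module.finrank F (W t) = ∑ j ∈ Finset.range (k - (t : ℕ)), μ j) ∧
        (Module.finrank F
            ↥(W ⟨0, hk⟩ ⊓ Submodule.comap Δ.mulVecLin (W ⟨0, hk⟩)) =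
          ∑ j ∈ Finset.range k, μ j) ∧
        (∀ t : Fin k, 1 ≤ (t : ℕ) →
          Module.finrank F ↥(W t ⊓ Submodule.comap Δ.mulVecLin (W t)) =
            (∑ j ∈ Finset.range (k - (t : ℕ)), μ j) - μ (k - (t : ℕ))) ∧
        (∀ (t : ℕ) (h : t + 1 < k),
          W ⟨t + 1, h⟩ ≤ W ⟨t, by omega⟩ ⊓ Submodule.comap Δ.mulVecLin (W ⟨t, by omega⟩))} := by
  rw [sigmaProf]
  apply Nat.card_congr
  refine ⟨fun W => ⟨fun t => iterSpan Δ W.1 (k - (t : ℕ)), ?_, ?_, ?_, ?_⟩,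
      fun c => ⟨c.1 ⟨k - 1, by omega⟩, ?_⟩, ?_, ?_⟩
  · -- dimensions
    intro t
    exact profile_finrank Δ W.1 W.2 (by have := t.isLt; omega)
  · -- invariance at top
    show Module.finrank F ↥(iterSpan Δ W.1 (k - 0) ⊓
        Submodule.comap Δ.mulVecLin (iterSpan Δ W.1 (k - 0))) = _
    rw [Nat.sub_zero,
      inf_eq_left.2 (Submodule.map_le_iff_le_comap.1 (profile_invariant Δ W.1 hk hμk W.2))]
    exact profile_finrank Δ W.1 W.2 hk
  · -- intersections
    intro t ht
    exact profile_inf Δ W.1 hμ W.2 (by have := t.isLt; omega)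
  · -- chain containments
    intro t h
    show iterSpan Δ W.1 (k - (t + 1)) ≤ iterSpan Δ W.1 (k - t) ⊓
      Submodule.comap Δ.mulVecLin (iterSpan Δ W.1 (k - t))
    refine le_inf (iterSpan_mono Δ W.1 (by omega)) (Submodule.map_le_iff_le_comap.1 ?_)
    exact le_trans (map_iterSpan_le Δ W.1 (k - (t + 1))) (iterSpan_mono Δ W.1 (by omega))
  · -- inverse map is well-defined
    obtain ⟨hA, hB, hC, hD⟩ := c.2
    exact chain_profile Δ hk c.1 hμ hμk hA hB hC hD
  · -- left inverse
    intro W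
    apply Subtype.ext
    show iterSpan Δ W.1 (k - ((⟨k - 1, by omega⟩ : Fin k) : ℕ)) = W.1
    have e : k - ((⟨k - 1, by omega⟩ : Fin k) : ℕ) = 1 := by simp; omega
    rw [e, iterSpan_one]
  · -- right inverse
    intro c
    apply Subtype.ext
    funext t
    obtain ⟨hA, hB, hC, hD⟩ := c.2
    show iterSpan Δ (c.1 ⟨k - 1, by omega⟩) (k - (t : ℕ)) = c.1 t
    rw [chain_claim Δ hk c.1 hμ hA hC hD (k - (t : ℕ)) (by have := t.isLt; omega)
      (by omega), fin_congr c.1 (by have := t.isLt; omega : k - (k - (t : ℕ)) = (t : ℕ))]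
end

section
/- Let I be a finite order ideal of Young's lattice, i.e. a finite set of partitions such that whenever μ ∈ I and λ ⊆ μ then λ ∈ I. Work in the polynomial ring over ℤ in the indeterminates x_{i,j} indexed by pairs of nonnegative integers, and for partitions λ, μ set x_λ^μ = ∏_{k≥1} x_{k,λ_k}^{μ_k} (a finite product). Then there exists ε ∈ {1, −1} such that det( x_λ^μ )_{λ,μ ∈ I} = ε · ∏_{λ ∈ I} x_λ^{sh(λ)} · ∏_{λ,μ ∈ I, λ ≺ μ} (x_{r(λ,μ), μ_{r(λ,μ)}} − x_{r(λ,μ), λ_{r(λ,μ)}}), where sh(λ) = (λ2, λ3, …), and λ ≺ μ means λ ⊆ μ and λ, μ differ in exactly one coordinate, that coordinate being denoted r(λ,μ). -/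
open Matrix Module Polynomial

attribute [local instance] Classical.propDecidable

/-- The monomial `x_λ^e = ∏_k x_{k, λ_k}^{e_k}` in the variables `x_{k,j}`. -/
noncomputable def xmon (lam : ℕ →₀ ℕ) (e : ℕ → ℕ) : MvPolynomial (ℕ × ℕ) ℤ :=
  ∏ᶠ k : ℕ, MvPolynomial.X (k, lam k) ^ e k

/-- For `lam ≺ mu` (differing in exactly one coordinate `r`), this is the factor
`x_{r, mu_r} - x_{r, lam_r}`. -/
noncomputable def covFactor (lam mu : ℕ →₀ ℕ) : MvPolynomial (ℕ × ℕ) ℤ :=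
  ∏ᶠ r : ℕ,
    if lam r ≠ mu r then MvPolynomial.X (r, mu r) - MvPolynomial.X (r, lam r) else 1


namespace S15

abbrev S : Type := MvPolynomial (ℕ × ℕ) ℤ

/-- per-coordinate modified-Newton factor -/
noncomputable def fk (μ : ℕ →₀ ℕ) (k : ℕ) : Polynomial S :=
  Polynomial.X ^ (μ (k+1)) *
    ∏ v ∈ Finset.Ico (μ (k+1)) (μ k), (Polynomial.X - Polynomial.C (MvPolynomial.X (k, v)))

lemma fk_monic (μ : ℕ →₀ ℕ) (k : ℕ) : (fk μ k).Monic :=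
  (monic_X_pow _).mul (monic_prod_of_monic _ _ fun _ _ => monic_X_sub_C _)

lemma fk_natDegree {μ : ℕ →₀ ℕ} {k : ℕ} (h : μ (k+1) ≤ μ k) : (fk μ k).natDegree = μ k := by
  rw [fk, (monic_X_pow _).natDegree_mul (monic_prod_of_monic _ _ fun _ _ => monic_X_sub_C _),
    natDegree_X_pow, natDegree_prod_of_monic _ _ (fun _ _ => monic_X_sub_C _)]
  simp only [natDegree_X_sub_C, Finset.sum_const, Nat.card_Ico, smul_eq_mul, mul_one]
  omega

lemma fk_coeff_lt {μ : ℕ →₀ ℕ} {k j : ℕ} (h : j < μ (k+1)) : (fk μ k).coeff j = 0 := by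
  rw [fk, mul_comm, Polynomial.coeff_mul_X_pow', if_neg (by omega)]

lemma fk_coeff_top {μ : ℕ →₀ ℕ} {k : ℕ} (h : μ (k+1) ≤ μ k) : (fk μ k).coeff (μ k) = 1 := by
  have := (fk_monic μ k).coeff_natDegree
  rwa [fk_natDegree h] at this

lemma fk_eval {μ : ℕ →₀ ℕ} {k : ℕ} (h : μ (k+1) ≤ μ k) (t : S) :
    Polynomial.eval t (fk μ k) =
      ∑ j ∈ Finset.Icc (μ (k+1)) (μ k), (fk μ k).coeff j * t ^ j := by
  rw [Polynomial.eval_eq_sum_range' (n := μ k + 1) (by rw [fk_natDegree h]; omega) t]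
  symm
  apply Finset.sum_subset
  · intro j hj
    simp only [Finset.mem_Icc] at hj
    simp only [Finset.mem_range]
    omega
  · intro j hj hj2
    simp only [Finset.mem_Icc, not_and, not_le] at hj2
    simp only [Finset.mem_range] at hj
    by_cases hlow : j < μ (k+1)
    · rw [fk_coeff_lt hlow, zero_mul]
    · rw [Polynomial.coeff_eq_zero_of_natDegree_lt, zero_mul]
      rw [fk_natDegree h]
      omega

lemma fk_eval_expand (μ : ℕ →₀ ℕ) (k : ℕ) (t : S) :
    Polynomial.eval t (fk μ k) =
      t ^ (μ (k+1)) * ∏ v ∈ Finset.Ico (μ (k+1)) (μ k), (t - MvPolynomial.X (k, v)) := by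
  simp [fk, Polynomial.eval_prod]

noncomputable def Box (μ : ℕ →₀ ℕ) : Finset (ℕ →₀ ℕ) :=
  (Finset.Iic μ).filter fun β => ∀ k, μ (k+1) ≤ β k

lemma mem_Box {β μ : ℕ →₀ ℕ} : β ∈ Box μ ↔ β ≤ μ ∧ ∀ k, μ (k+1) ≤ β k := by
  simp [Box]

lemma Box_ptn {β μ : ℕ →₀ ℕ} (hβ : β ∈ Box μ) : IsPtn β := by
  rw [mem_Box] at hβ
  exact fun k => le_trans (Finsupp.le_def.1 hβ.1 (k+1)) (hβ.2 k)

lemma master {n : ℕ} {μ : ℕ →₀ ℕ} (hμ : IsPtn μ) (hn : ∀ k, n ≤ k → μ k = 0) (t : ℕ → S) :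
    ∏ k ∈ Finset.range n, Polynomial.eval (t k) (fk μ k) =
      ∑ β ∈ Box μ, (∏ k ∈ Finset.range n, (fk μ k).coeff (β k)) *
        ∏ k ∈ Finset.range n, t k ^ (β k) := by
  have step1 : ∏ k ∈ Finset.range n, Polynomial.eval (t k) (fk μ k)
      = ∏ k ∈ Finset.range n, ∑ j ∈ Finset.Icc (μ (k+1)) (μ k), (fk μ k).coeff j * t k ^ j :=
    Finset.prod_congr rfl fun k _ => fk_eval (hμ k) (t k)
  rw [step1, Finset.prod_sum]
  refine Finset.sum_bij'
    (i := fun p hp => Finsupp.onFinset (Finset.range n)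
      (fun k => if h : k ∈ Finset.range n then p k h else 0)
      (fun k hk => by by_contra hc; simp [hc] at hk))
    (j := fun β hβ => fun k _ => β k) ?_ ?_ ?_ ?_ ?_
  · intro p hp
    rw [Finset.mem_pi] at hp
    rw [mem_Box]
    constructor
    · rw [Finsupp.le_def]
      intro k
      simp only [Finsupp.onFinset_apply]
      split
      · next h => exact (Finset.mem_Icc.1 (hp k h)).2
      · exact Nat.zero_le _
    · intro k
      simp only [Finsupp.onFinset_apply]
      split
      · next h => exact (Finset.mem_Icc.1 (hp k h)).1
      · next h =>
        have : μ (k+1) = 0 := hn _ (by simp only [Finset.mem_range, not_lt] at h; omega)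
        omega
  · intro β hβ
    rw [mem_Box] at hβ
    rw [Finset.mem_pi]
    intro k hk
    exact Finset.mem_Icc.2 ⟨hβ.2 k, Finsupp.le_def.1 hβ.1 k⟩
  · intro p hp
    funext k hk
    simp [Finset.mem_range.1 hk]
  · intro β hβ
    rw [mem_Box] at hβ
    ext k
    simp only [Finsupp.onFinset_apply]
    split
    · rfl
    · next h =>
      have h0 : μ k = 0 := hn _ (by simpa [Finset.mem_range, not_lt] using h)
      have := Finsupp.le_def.1 hβ.1 k
      omega
  · intro p hp
    rw [← Finset.prod_mul_distrib]
    rw [← Finset.prod_attach (Finset.range n)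
      (fun k => (fk μ k).coeff ((Finsupp.onFinset (Finset.range n)
        (fun k => if h : k ∈ Finset.range n then p k h else 0)
        (fun k hk => by by_contra hc; simp [hc] at hk)) k) *
        t k ^ ((Finsupp.onFinset (Finset.range n)
        (fun k => if h : k ∈ Finset.range n then p k h else 0)
        (fun k hk => by by_contra hc; simp [hc] at hk)) k))]
    refine Finset.prod_congr rfl fun x _ => ?_
    simp [Finset.mem_range.1 x.2]

lemma det_tri {m : Type} [Fintype m] [DecidableEq m] {R : Type} [CommRing R]
    (A : Matrix m m R) (w : m → ℕ)
    (h : ∀ i j, A i j ≠ 0 → j = i ∨ w j < w i) : A.det = ∏ i, A i i := by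
  rw [Matrix.det_apply]
  rw [Finset.sum_eq_single (1 : Equiv.Perm m)]
  · simp
  · intro σ _ hσ
    have hP : ∏ i, A (σ i) i = 0 := by
      by_contra hP
      have hne : ∀ i, A (σ i) i ≠ 0 := fun i hi =>
        hP (Finset.prod_eq_zero (Finset.mem_univ i) hi)
      have hle : ∀ i, i = σ i ∨ w i < w (σ i) := fun i => h (σ i) i (hne i)
      obtain ⟨i0, hi0⟩ : ∃ i, σ i ≠ i := by
        by_contra hc
        push_neg at hc
        exact hσ (Equiv.ext hc)
      have hlt : ∑ i, w i < ∑ i, w (σ i) := by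
        refine Finset.sum_lt_sum (fun i _ => ?_) ⟨i0, Finset.mem_univ _, ?_⟩
        · rcases hle i with e | e
          · rw [← e]
          · exact le_of_lt e
        · exact (hle i0).resolve_left fun e => hi0 e.symm
      rw [Equiv.sum_comp σ w] at hlt
      omega
    rw [hP, smul_zero]
  · intro h1; exact absurd (Finset.mem_univ _) h1

lemma ptnSize_lt {β l : ℕ →₀ ℕ} (h : β ≤ l) (hne : β ≠ l) : ptnSize β < ptnSize l := by
  have hpt : ∀ k, β k ≤ l k := Finsupp.le_def.1 h
  obtain ⟨k0, hk0⟩ : ∃ k, β k ≠ l k := by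
    by_contra hc; push_neg at hc; exact hne (Finsupp.ext hc)
  have hsub : β.support ⊆ l.support := by
    intro k hk
    rw [Finsupp.mem_support_iff] at *
    have := hpt k; omega
  rw [ptnSize, ptnSize, Finsupp.sum_of_support_subset β hsub _ (fun _ _ => rfl),
    Finsupp.sum]
  refine Finset.sum_lt_sum (fun i _ => hpt i) ⟨k0, ?_, ?_⟩
  · rw [Finsupp.mem_support_iff]; have := hpt k0; omega
  · have := hpt k0; omega

lemma xmon_eq_prod (l : ℕ →₀ ℕ) (e : ℕ → ℕ) (n : ℕ) (he : ∀ k, n ≤ k → e k = 0) :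
    xmon l e = ∏ k ∈ Finset.range n, MvPolynomial.X (k, l k) ^ e k := by
  rw [xmon]
  apply finprod_eq_prod_of_mulSupport_subset
  intro k hk
  simp only [Function.mem_mulSupport] at hk
  by_contra hc
  simp only [Finset.coe_range, Set.mem_Iio, not_lt] at hc
  rw [he k hc, pow_zero] at hk
  exact hk rfl

lemma update_apply (μ : ℕ →₀ ℕ) (k v i : ℕ) :
    (μ.update k v) i = if i = k then v else μ i := by
  classical
  rw [Finsupp.coe_update, Function.update_apply]

lemma covFactor_update {μ : ℕ →₀ ℕ} {k v : ℕ} (hv : v ≠ μ k) :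
    covFactor (μ.update k v) μ = MvPolynomial.X (k, μ k) - MvPolynomial.X (k, v) := by
  rw [covFactor, finprod_eq_single _ k]
  · rw [update_apply, if_pos rfl, if_pos hv]
  · intro r hr
    rw [update_apply, if_neg hr]
    simp

lemma isPtn_update {μ : ℕ →₀ ℕ} (hμ : IsPtn μ) {k v : ℕ}
    (h1 : μ (k+1) ≤ v) (h2 : v ≤ μ k) : IsPtn (μ.update k v) := by
  intro i
  rw [update_apply, update_apply]
  have := hμ i
  split
  · next h =>
    rw [if_neg (by omega)]
    subst h
    have := hμ i
    omega
  · next h =>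
    split
    · next h' => subst h'; exact h1
    · exact hμ i

lemma update_le {μ : ℕ →₀ ℕ} {k v : ℕ} (h2 : v ≤ μ k) : μ.update k v ≤ μ := by
  rw [Finsupp.le_def]
  intro i
  rw [update_apply]
  split
  · next h => subst h; exact h2
  · exact le_refl _

lemma diag_cov (I : Finset (ℕ →₀ ℕ)) (hptn : ∀ l ∈ I, IsPtn l)
    (hideal : ∀ l mu : ℕ →₀ ℕ, mu ∈ I → IsPtn l → l ≤ mu → l ∈ I)
    (n : ℕ) (hbound : ∀ μ ∈ I, ∀ k, n ≤ k → μ k = 0)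
    (μ : ℕ →₀ ℕ) (hμI : μ ∈ I) :
    ∏ k ∈ Finset.range n, ∏ v ∈ Finset.Ico (μ (k+1)) (μ k),
        (MvPolynomial.X (k, μ k) - MvPolynomial.X (k, v)) =
      ∏ l ∈ I, (if l ≤ μ ∧ (∃! r : ℕ, l r ≠ μ r) then covFactor l μ else 1) := by
  have hμ := hptn μ hμI
  rw [← Finset.prod_filter]
  rw [← Finset.prod_sigma (Finset.range n) (fun k => Finset.Ico (μ (k+1)) (μ k))
    (fun x => (MvPolynomial.X (x.1, μ x.1) - MvPolynomial.X (x.1, x.2) : MvPolynomial (ℕ × ℕ) ℤ))]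
  refine Finset.prod_bij (fun x _ => μ.update x.1 x.2) ?_ ?_ ?_ ?_
  · rintro ⟨k, v⟩ hx
    dsimp only
    simp only [Finset.mem_sigma, Finset.mem_range, Finset.mem_Ico] at hx
    obtain ⟨hkn, hv1, hv2⟩ := hx
    have hne : v ≠ μ k := by omega
    rw [Finset.mem_filter]
    refine ⟨hideal _ _ hμI (isPtn_update hμ hv1 (le_of_lt hv2)) (update_le (le_of_lt hv2)),
      update_le (le_of_lt hv2), k, ?_, ?_⟩
    · show (μ.update k v) k ≠ μ k
      rw [update_apply, if_pos rfl]
      exact hne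
    · intro r hr
      have hr' : (μ.update k v) r ≠ μ r := hr
      rw [update_apply] at hr'
      by_contra hc
      rw [if_neg hc] at hr'
      exact hr' rfl
  · rintro ⟨k, v⟩ hx ⟨k', v'⟩ hx' heq
    dsimp only at heq
    simp only [Finset.mem_sigma, Finset.mem_range, Finset.mem_Ico] at hx hx'
    have h1 : (μ.update k v) k = (μ.update k' v') k := by rw [heq]
    rw [update_apply, update_apply, if_pos rfl] at h1
    by_cases hkk : k = k'
    · subst hkk
      rw [if_pos rfl] at h1
      subst h1
      rfl
    · exfalso
      rw [if_neg hkk] at h1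
      omega
  · intro l hl
    rw [Finset.mem_filter] at hl
    obtain ⟨hlI, hle, r, hr, hru⟩ := hl
    have hlr : l r < μ r := lt_of_le_of_ne (Finsupp.le_def.1 hle r) hr
    have hrn : r < n := by
      by_contra hc
      have := hbound μ hμI r (by omega)
      omega
    have hstep : μ (r+1) ≤ l r := by
      have h1 : l (r+1) = μ (r+1) := by
        by_contra hc
        have := hru (r+1) hc
        omega
      have := hptn l hlI r
      omega
    refine ⟨⟨r, l r⟩, by
      simp only [Finset.mem_sigma, Finset.mem_range, Finset.mem_Ico]
      exact ⟨hrn, hstep, hlr⟩, ?_⟩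
    dsimp only
    ext i
    rw [update_apply]
    split
    · next h => subst h; rfl
    · next h =>
      by_contra hc
      have := hru i (fun e => hc e.symm)
      exact h this
  · rintro ⟨k, v⟩ hx
    dsimp only
    simp only [Finset.mem_sigma, Finset.mem_range, Finset.mem_Ico] at hx
    rw [covFactor_update (by omega)]

lemma N_tri {n : ℕ} {l μ : ℕ →₀ ℕ} (hl : IsPtn l)
    (hnμ : ∀ k, n ≤ k → μ k = 0) (hnle : ¬ μ ≤ l) :
    ∏ k ∈ Finset.range n, Polynomial.eval (MvPolynomial.X (k, l k)) (fk μ k) = 0 := by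
  have hex : ∃ k, l k < μ k := by
    by_contra hc
    push_neg at hc
    exact hnle (Finsupp.le_def.2 fun k => hc k)
  obtain ⟨k0, hk0⟩ := hex
  set T := (Finset.range n).filter (fun k => l k < μ k) with hT
  have hk0T : k0 ∈ T := by
    rw [hT, Finset.mem_filter, Finset.mem_range]
    refine ⟨?_, hk0⟩
    by_contra hc
    have := hnμ k0 (by omega)
    omega
  have hTne : T.Nonempty := ⟨k0, hk0T⟩
  set k := T.max' hTne with hk
  have hkT : k ∈ T := T.max'_mem hTne
  rw [hT, Finset.mem_filter, Finset.mem_range] at hkT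
  obtain ⟨hkn, hklt⟩ := hkT
  have hlow : μ (k+1) ≤ l k := by
    have h1 : μ (k+1) ≤ l (k+1) := by
      by_contra hc
      push_neg at hc
      have hmem : k + 1 ∈ T := by
        rw [hT, Finset.mem_filter, Finset.mem_range]
        refine ⟨?_, hc⟩
        by_contra hc2
        have := hnμ (k+1) (by omega)
        omega
      have := T.le_max' _ hmem
      omega
    have := hl k
    omega
  apply Finset.prod_eq_zero (Finset.mem_range.2 hkn)
  rw [fk_eval_expand]
  apply mul_eq_zero_of_right
  apply Finset.prod_eq_zero (i := l k) (Finset.mem_Ico.2 ⟨hlow, hklt⟩)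
  exact sub_self _

end S15


/-- Buck, Coley and Robbins. For a finite order ideal `I` of Young's
lattice, `det(x_λ^μ)_{λ,μ ∈ I} = ± ∏_{λ∈I} x_λ^{sh(λ)} ∏_{λ ≺ μ in I} (x_{r,μ_r} - x_{r,λ_r})`. -/
theorem statement15 (I : Finset (ℕ →₀ ℕ)) (hptn : ∀ l ∈ I, IsPtn l)
    (hideal : ∀ l mu : ℕ →₀ ℕ, mu ∈ I → IsPtn l → l ≤ mu → l ∈ I) :
    ∃ ε : ℤ, (ε = 1 ∨ ε = -1) ∧
      Matrix.det (Matrix.of fun l mu : I => xmon l.1 ⇑mu.1) =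
        (ε : MvPolynomial (ℕ × ℕ) ℤ) * (∏ l ∈ I, xmon l (fun k => l (k + 1))) *
          ∏ l ∈ I, ∏ mu ∈ I,
            if l ≤ mu ∧ (∃! r : ℕ, l r ≠ mu r) then covFactor l mu else 1 := by
  classical
  set n := (I.sup fun μ => μ.support.sup id) + 1 with hn
  have hbound : ∀ μ ∈ I, ∀ k, n ≤ k → μ k = 0 := by
    intro μ hμ k hk
    by_contra h
    have hmem : k ∈ μ.support := Finsupp.mem_support_iff.2 h
    have h1 : k ≤ μ.support.sup id := Finset.le_sup (f := id) hmem
    have h2 : μ.support.sup id ≤ I.sup (fun μ => μ.support.sup id) :=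
      Finset.le_sup (f := fun μ => μ.support.sup id) hμ
    omega
  set Ufun : (ℕ →₀ ℕ) → (ℕ →₀ ℕ) → S15.S := fun β μ =>
    if β ∈ S15.Box μ then ∏ k ∈ Finset.range n, (S15.fk μ k).coeff (β k) else 0 with hUfun
  set Nfun : (ℕ →₀ ℕ) → (ℕ →₀ ℕ) → S15.S := fun l μ =>
    ∏ k ∈ Finset.range n, Polynomial.eval (MvPolynomial.X (k, l k)) (S15.fk μ k) with hNfun
  set M : Matrix I I S15.S := Matrix.of fun l mu : I => xmon l.1 ⇑mu.1 with hM
  set U : Matrix I I S15.S := Matrix.of fun β μ : I => Ufun β.1 μ.1 with hU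
  set N : Matrix I I S15.S := Matrix.of fun l μ : I => Nfun l.1 μ.1 with hN
  have hMU : M * U = N := by
    refine Matrix.ext fun l μ => ?_
    rw [Matrix.mul_apply]
    show (∑ β : I, xmon l.1 ⇑β.1 * Ufun β.1 μ.1) = Nfun l.1 μ.1
    rw [Finset.sum_coe_sort I (fun β => xmon l.1 ⇑β * Ufun β μ.1)]
    have hstep : ∑ β ∈ I, xmon l.1 ⇑β * Ufun β μ.1
        = ∑ β ∈ I, (if β ∈ S15.Box μ.1 then
            xmon l.1 ⇑β * ∏ k ∈ Finset.range n, (S15.fk μ.1 k).coeff (β k) else 0) := by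
      refine Finset.sum_congr rfl fun β hβ => ?_
      rw [hUfun]
      simp only [mul_ite, mul_zero]
    rw [hstep, Finset.sum_ite_mem]
    have hinter : I ∩ S15.Box μ.1 = S15.Box μ.1 := by
      apply Finset.inter_eq_right.2
      intro β hβ
      exact hideal β μ.1 μ.2 (S15.Box_ptn hβ) (S15.mem_Box.1 hβ).1
    rw [hinter]
    show _ = ∏ k ∈ Finset.range n, Polynomial.eval (MvPolynomial.X (k, l.1 k)) (S15.fk μ.1 k)
    rw [S15.master (hptn μ.1 μ.2) (hbound μ.1 μ.2) (fun k => MvPolynomial.X (k, l.1 k))]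
    refine Finset.sum_congr rfl fun β hβ => ?_
    have hβ0 : ∀ k, n ≤ k → β k = 0 := by
      intro k hk
      have h1 := Finsupp.le_def.1 (S15.mem_Box.1 hβ).1 k
      have h2 := hbound μ.1 μ.2 k hk
      omega
    rw [S15.xmon_eq_prod l.1 ⇑β n hβ0, mul_comm]
  have hUdiag : ∀ i : {x // x ∈ I}, Ufun i.1 i.1 = 1 := by
    intro i
    show (if i.1 ∈ S15.Box i.1 then ∏ k ∈ Finset.range n, (S15.fk i.1 k).coeff (i.1 k) else 0) = 1
    rw [if_pos (S15.mem_Box.2 ⟨le_refl _, fun k => hptn i.1 i.2 k⟩)]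
    rw [Finset.prod_congr rfl (fun k _ => S15.fk_coeff_top (hptn i.1 i.2 k))]
    exact Finset.prod_const_one
  have hUdet : U.det = 1 := by
    rw [← Matrix.det_transpose]
    rw [S15.det_tri Uᵀ (fun i => ptnSize i.1) ?_]
    · calc ∏ i : {x // x ∈ I}, Uᵀ i i = ∏ i : {x // x ∈ I}, (1 : S15.S) :=
          Finset.prod_congr rfl (fun i _ => hUdiag i)
        _ = 1 := Finset.prod_const_one
    · intro i j hne
      have hne' : Ufun j.1 i.1 ≠ 0 := hne
      have hmem : j.1 ∈ S15.Box i.1 := by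
        by_contra hc
        rw [hUfun] at hne'
        simp only [hc, if_false] at hne'
        exact hne' rfl
      by_cases heq : j.1 = i.1
      · left; exact Subtype.ext heq
      · right; exact S15.ptnSize_lt (S15.mem_Box.1 hmem).1 heq
  have hNtri : ∀ i j : {x // x ∈ I}, N i j ≠ 0 → j = i ∨ ptnSize j.1 < ptnSize i.1 := by
    intro i j hne
    have hle : j.1 ≤ i.1 := by
      by_contra hc
      exact hne (show Nfun i.1 j.1 = 0 from S15.N_tri (hptn i.1 i.2) (hbound j.1 j.2) hc)
    by_cases heq : j.1 = i.1
    · left; exact Subtype.ext heq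
    · right; exact S15.ptnSize_lt hle heq
  have hdiag : ∀ μ ∈ I, Nfun μ μ = xmon μ (fun k => μ (k+1)) *
      ∏ l ∈ I, (if l ≤ μ ∧ (∃! r : ℕ, l r ≠ μ r) then covFactor l μ else 1) := by
    intro μ hμI
    show (∏ k ∈ Finset.range n, Polynomial.eval (MvPolynomial.X (k, μ k)) (S15.fk μ k)) = _
    rw [Finset.prod_congr rfl (fun k _ => S15.fk_eval_expand μ k _), Finset.prod_mul_distrib]
    congr 1
    · exact (S15.xmon_eq_prod μ (fun k => μ (k+1)) n
        (fun k hk => hbound μ hμI (k+1) (by omega))).symm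
    · exact S15.diag_cov I hptn hideal n hbound μ hμI
  refine ⟨1, Or.inl rfl, ?_⟩
  rw [Int.cast_one, one_mul]
  calc M.det = M.det * U.det := by rw [hUdet, mul_one]
    _ = (M * U).det := (Matrix.det_mul M U).symm
    _ = N.det := by rw [hMU]
    _ = ∏ i : {x // x ∈ I}, N i i := S15.det_tri N (fun i => ptnSize i.1) hNtri
    _ = ∏ μ ∈ I, Nfun μ μ := Finset.prod_coe_sort I (fun μ => Nfun μ μ)
    _ = ∏ μ ∈ I, (xmon μ (fun k => μ (k+1)) *
          ∏ l ∈ I, (if l ≤ μ ∧ (∃! r : ℕ, l r ≠ μ r) then covFactor l μ else 1)) :=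
        Finset.prod_congr rfl (fun μ h => hdiag μ h)
    _ = (∏ μ ∈ I, xmon μ (fun k => μ (k+1))) *
          ∏ μ ∈ I, ∏ l ∈ I, (if l ≤ μ ∧ (∃! r : ℕ, l r ≠ μ r) then covFactor l μ else 1) :=
        Finset.prod_mul_distrib
    _ = (∏ l ∈ I, xmon l (fun k => l (k + 1))) *
          ∏ l ∈ I, ∏ mu ∈ I, (if l ≤ mu ∧ (∃! r : ℕ, l r ≠ mu r) then covFactor l mu else 1) := by
        rw [Finset.prod_comm]
end
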